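/- arXiv:0909.2384 — 6 statements merged into one kernel-verified Lean document; each statement's English description precedes it below -/
import Mathlib

section
/- Let R be a commutative ring, let M be a Gorenstein projective R-module, let 0 → M →α P →β M → 0 be a short exact sequence of R-modules with P projective, let Q be a projective R-module, and let u : M → Q be an R-module homomorphism. Then there exists an R-module homomorphism γ : P → Q ⊕ Q such that γ ∘ α = ι ∘ u and j ∘ γ = u ∘ β, where ι : Q → Q ⊕ Q is the canonical injection q ↦ (q, 0) and j : Q ⊕ Q → Q is the canonical projection (q, q') ↦ q'. -/
universe u v

section Defs

variable (R : Type u) [CommRing R]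

/-- An `R`-module `M` is *Gorenstein projective* if there is a doubly infinite exact
sequence of projective modules `⋯ → P i → P (i+1) → ⋯` with `M` isomorphic to the image
of `P 0 → P 1`, which remains exact after applying `Hom_R(−, Q)` for every projective `Q`. -/
def IsGorensteinProjective (M : ModuleCat.{v} R) : Prop :=
  ∃ (P : ℤ → ModuleCat.{v} R) (d : ∀ i : ℤ, P i →ₗ[R] P (i + 1)),
    (∀ i : ℤ, Module.Projective R (P i)) ∧
    (∀ i : ℤ, LinearMap.range (d i) = LinearMap.ker (d (i + 1))) ∧
    Nonempty (M ≃ₗ[R] LinearMap.range (d 0)) ∧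
    (∀ (Q : ModuleCat.{v} R), Module.Projective R Q →
      ∀ (i : ℤ) (g : P (i + 1) →ₗ[R] Q), g ∘ₗ d i = 0 →
        ∃ h : P (i + 1 + 1) →ₗ[R] Q, h ∘ₗ d (i + 1) = g)

/-- An `R`-module `M` is *strongly Gorenstein projective* if there is an exact sequence
`⋯ → P → P → P → ⋯` with one projective module `P` and one map `f`, `M ≅ Im f`,
which remains exact after applying `Hom_R(−, Q)` for every projective `Q`. -/
def IsStronglyGorensteinProjective (M : ModuleCat.{v} R) : Prop :=
  ∃ (P : ModuleCat.{v} R) (f : P →ₗ[R] P),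
    Module.Projective R P ∧
    LinearMap.range f = LinearMap.ker f ∧
    Nonempty (M ≃ₗ[R] LinearMap.range f) ∧
    (∀ (Q : ModuleCat.{v} R), Module.Projective R Q →
      ∀ g : P →ₗ[R] Q, g ∘ₗ f = 0 → ∃ h : P →ₗ[R] Q, h ∘ₗ f = g)

/-- Gorenstein injective modules, dual to Gorenstein projective ones. -/
def IsGorensteinInjective (M : ModuleCat.{v} R) : Prop :=
  ∃ (E : ℤ → ModuleCat.{v} R) (d : ∀ i : ℤ, E i →ₗ[R] E (i + 1)),
    (∀ i : ℤ, Module.Injective R (E i)) ∧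
    (∀ i : ℤ, LinearMap.range (d i) = LinearMap.ker (d (i + 1))) ∧
    Nonempty (M ≃ₗ[R] LinearMap.range (d 0)) ∧
    (∀ (I : ModuleCat.{v} R), Module.Injective R I →
      ∀ (i : ℤ) (g : I →ₗ[R] E (i + 1)), d (i + 1) ∘ₗ g = 0 →
        ∃ h : I →ₗ[R] E i, d i ∘ₗ h = g)

/-- Strongly Gorenstein injective modules. -/
def IsStronglyGorensteinInjective (M : ModuleCat.{v} R) : Prop :=
  ∃ (E : ModuleCat.{v} R) (f : E →ₗ[R] E),
    Module.Injective R E ∧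
    LinearMap.range f = LinearMap.ker f ∧
    Nonempty (M ≃ₗ[R] LinearMap.range f) ∧
    (∀ (I : ModuleCat.{v} R), Module.Injective R I →
      ∀ g : I →ₗ[R] E, f ∘ₗ g = 0 → ∃ h : I →ₗ[R] E, f ∘ₗ h = g)

/-- An `R`-module `M` is *Gorenstein flat* if there is a doubly infinite exact sequence of
flat modules with `M` isomorphic to the image of the middle map, which remains exact after
applying `− ⊗_R I` for every injective `R`-module `I`. -/
def IsGorensteinFlat (M : ModuleCat.{v} R) : Prop :=
  ∃ (F : ℤ → ModuleCat.{v} R) (d : ∀ i : ℤ, F i →ₗ[R] F (i + 1)),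
    (∀ i : ℤ, Module.Flat R (F i)) ∧
    (∀ i : ℤ, LinearMap.range (d i) = LinearMap.ker (d (i + 1))) ∧
    Nonempty (M ≃ₗ[R] LinearMap.range (d 0)) ∧
    (∀ (I : ModuleCat.{v} R), Module.Injective R I →
      ∀ i : ℤ, LinearMap.range (LinearMap.rTensor (R := R) I (d i)) =
        LinearMap.ker (LinearMap.rTensor (R := R) I (d (i + 1))))

/-- Strongly Gorenstein flat modules. -/
def IsStronglyGorensteinFlat (M : ModuleCat.{v} R) : Prop :=
  ∃ (F : ModuleCat.{v} R) (f : F →ₗ[R] F),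
    Module.Flat R F ∧
    LinearMap.range f = LinearMap.ker f ∧
    Nonempty (M ≃ₗ[R] LinearMap.range f) ∧
    (∀ (I : ModuleCat.{v} R), Module.Injective R I →
      LinearMap.range (LinearMap.rTensor (R := R) I f) =
        LinearMap.ker (LinearMap.rTensor (R := R) I f))

/-- `GorensteinProjDimLE R n M` means the Gorenstein projective dimension of `M` is `≤ n`:
there is an exact sequence `0 → G_n → ⋯ → G_0 → M → 0` with all `G_i` Gorenstein projective. -/
def GorensteinProjDimLE : ℕ → ModuleCat.{v} R → Prop
  | 0, M => IsGorensteinProjective R M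
  | n + 1, M =>
    ∃ (G K : ModuleCat.{v} R) (f : K →ₗ[R] G) (g : G →ₗ[R] M),
      IsGorensteinProjective R G ∧ Function.Injective f ∧ Function.Surjective g ∧
      LinearMap.range f = LinearMap.ker g ∧ GorensteinProjDimLE n K

/-- `GorensteinFlatDimLE R n M` means the Gorenstein flat dimension of `M` is `≤ n`. -/
def GorensteinFlatDimLE : ℕ → ModuleCat.{v} R → Prop
  | 0, M => IsGorensteinFlat R M
  | n + 1, M =>
    ∃ (G K : ModuleCat.{v} R) (f : K →ₗ[R] G) (g : G →ₗ[R] M),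
      IsGorensteinFlat R G ∧ Function.Injective f ∧ Function.Surjective g ∧
      LinearMap.range f = LinearMap.ker g ∧ GorensteinFlatDimLE n K

/-- `ProjDimLE R n M` means the projective dimension of `M` is `≤ n`. -/
def ProjDimLE : ℕ → ModuleCat.{v} R → Prop
  | 0, M => Module.Projective R M
  | n + 1, M =>
    ∃ (G K : ModuleCat.{v} R) (f : K →ₗ[R] G) (g : G →ₗ[R] M),
      Module.Projective R G ∧ Function.Injective f ∧ Function.Surjective g ∧
      LinearMap.range f = LinearMap.ker g ∧ ProjDimLE n K

/-- `FlatDimLE R n M` means the flat dimension of `M` is `≤ n`. -/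
def FlatDimLE : ℕ → ModuleCat.{v} R → Prop
  | 0, M => Module.Flat R M
  | n + 1, M =>
    ∃ (G K : ModuleCat.{v} R) (f : K →ₗ[R] G) (g : G →ₗ[R] M),
      Module.Flat R G ∧ Function.Injective f ∧ Function.Surjective g ∧
      LinearMap.range f = LinearMap.ker g ∧ FlatDimLE n K

/-- A commutative ring is *coherent* if every finitely generated ideal is finitely presented. -/
def IsCoherentRing : Prop :=
  ∀ I : Ideal R, I.FG → Module.FinitePresentation R I

end Defs

/-! Since `M` is Gorenstein projective, its complete resolution yields a projective presentation
`0 → K → F → M → 0` along which every map from `K` to a projective module extends, i.e.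
`Ext¹(M, Q) = 0`. Lifting `F → M` through `β` exhibits `P` as the pushout of `M ← K → F`, so `u`
extends along `α` to some `γ₁ : P → Q`, and `γ = (γ₁, u ∘ β)` is the required map. -/

section Extension

variable {R : Type*} [CommRing R] {M N P F Q : Type*}
  [AddCommGroup M] [Module R M] [AddCommGroup N] [Module R N] [AddCommGroup P] [Module R P]
  [AddCommGroup F] [Module R F] [AddCommGroup Q] [Module R Q]

theorem LinearMap.exists_comp_eq_of_sup_range_eq_top (α : M →ₗ[R] P) (φ : F →ₗ[R] P)
    (hαφ : LinearMap.range α ⊔ LinearMap.range φ = ⊤) (u : M →ₗ[R] Q) (h : F →ₗ[R] Q)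
    (hcompat : ∀ m x, α m = φ x → u m = h x) :
    ∃ γ : P →ₗ[R] Q, γ ∘ₗ α = u ∧ γ ∘ₗ φ = h := by
  set σ := α.coprod φ
  have hσ : Function.Surjective σ := LinearMap.range_eq_top.mp (by rwa [LinearMap.range_coprod])
  have hker : LinearMap.ker σ ≤ LinearMap.ker (u.coprod h) := by
    rintro ⟨m, x⟩ hmx
    have hmx' : α m = φ (-x) := by
      rw [map_neg, eq_neg_iff_add_eq_zero]; exact hmx
    simp only [LinearMap.mem_ker, LinearMap.coprod_apply, hcompat m (-x) hmx', map_neg,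
      neg_add_cancel]
  let γ := (LinearMap.ker σ).liftQ _ hker ∘ₗ (σ.quotKerEquivOfSurjective hσ).symm.toLinearMap
  have hγ : ∀ z, γ (σ z) = u.coprod h z := fun z => by
    simp [γ]
  refine ⟨γ, LinearMap.ext fun m => ?_, LinearMap.ext fun x => ?_⟩
  · simpa [σ] using hγ (m, 0)
  · simpa [σ] using hγ (0, x)

theorem LinearMap.exists_comp_subtype_eq_of_range_eq {A B C : Type*} [AddCommGroup A] [Module R A]
    [AddCommGroup B] [Module R B] [AddCommGroup C] [Module R C] (f : A →ₗ[R] B) (g : B →ₗ[R] C)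
    (hgf : g ∘ₗ f = 0)
    (hlift : ∀ g' : B →ₗ[R] Q, g' ∘ₗ f = 0 → ∃ h : C →ₗ[R] Q, h ∘ₗ g = g')
    {K : Submodule R C} (hK : LinearMap.range g = K) (v : K →ₗ[R] Q) :
    ∃ h : C →ₗ[R] Q, h ∘ₗ K.subtype = v := by
  subst hK
  have hgf' : g.rangeRestrict ∘ₗ f = 0 :=
    LinearMap.ext fun x => Subtype.ext (LinearMap.congr_fun hgf x)
  obtain ⟨h, hh⟩ := hlift (v ∘ₗ g.rangeRestrict) <| by
    rw [LinearMap.comp_assoc, hgf', LinearMap.comp_zero]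
  exact ⟨h, LinearMap.ext fun ⟨_, y, rfl⟩ => LinearMap.congr_fun hh y⟩

theorem LinearMap.exists_comp_eq_of_extend_from_ker [Module.Projective R F]
    {α : M →ₗ[R] P} {β : P →ₗ[R] N} (hα : Function.Injective α) (hβ : Function.Surjective β)
    (hexact : LinearMap.range α = LinearMap.ker β) {π : F →ₗ[R] N} (hπ : Function.Surjective π)
    (hext : ∀ v : LinearMap.ker π →ₗ[R] Q, ∃ h : F →ₗ[R] Q, h ∘ₗ (LinearMap.ker π).subtype = v)
    (u : M →ₗ[R] Q) :
    ∃ γ : P →ₗ[R] Q, γ ∘ₗ α = u := by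
  obtain ⟨φ, hφ⟩ := Module.projective_lifting_property β π hβ
  have hφ' (x : F) : β (φ x) = π x := LinearMap.congr_fun hφ x
  have hφ_ker (x : LinearMap.ker π) : φ x ∈ LinearMap.range α := by
    rw [hexact, LinearMap.mem_ker, hφ', x.2]
  let ψ : LinearMap.ker π →ₗ[R] M := (LinearEquiv.ofInjective α hα).symm.toLinearMap ∘ₗ
    (φ ∘ₗ (LinearMap.ker π).subtype).codRestrict (LinearMap.range α) hφ_ker
  have hψ (x : LinearMap.ker π) : α (ψ x) = φ x :=
    LinearEquiv.ofInjective_symm_apply (h := hα) _ _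
  obtain ⟨h, hh⟩ := hext (u ∘ₗ ψ)
  have hαφ : LinearMap.range α ⊔ LinearMap.range φ = ⊤ := by
    refine eq_top_iff.mpr fun p _ => ?_
    obtain ⟨x, hx⟩ := hπ (β p)
    have : p - φ x ∈ LinearMap.range α := by
      rw [hexact, LinearMap.mem_ker, map_sub, hφ', hx, sub_self]
    simpa using Submodule.add_mem_sup this (LinearMap.mem_range_self φ x)
  refine (LinearMap.exists_comp_eq_of_sup_range_eq_top α φ hαφ u h fun m x hmx => ?_).imp
    fun γ hγ => hγ.1
  have hx : x ∈ LinearMap.ker π := by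
    rw [LinearMap.mem_ker, ← hφ', ← hmx, ← LinearMap.mem_ker, ← hexact]
    exact LinearMap.mem_range_self α m
  obtain rfl : ψ ⟨x, hx⟩ = m := hα (by rw [hψ, hmx])
  exact (LinearMap.congr_fun hh ⟨x, hx⟩).symm

end Extension

theorem IsGorensteinProjective.exists_surjective_extend_ker {R : Type u} [CommRing R]
    {M : ModuleCat.{v} R} (hM : IsGorensteinProjective R M) :
    ∃ (F : ModuleCat.{v} R) (π : F →ₗ[R] M), Module.Projective R F ∧ Function.Surjective π ∧
      ∀ Q : ModuleCat.{v} R, Module.Projective R Q → ∀ v : LinearMap.ker π →ₗ[R] Q,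
        ∃ h : F →ₗ[R] Q, h ∘ₗ (LinearMap.ker π).subtype = v := by
  obtain ⟨P, d, hP, hexact, ⟨e⟩, hlift⟩ := hM
  let π := e.symm.toLinearMap ∘ₗ (d 0).rangeRestrict
  have hker : LinearMap.ker π = LinearMap.ker (d 0) := by
    rw [LinearEquiv.ker_comp, LinearMap.ker_rangeRestrict]
  refine ⟨P 0, π, hP 0, e.symm.surjective.comp (d 0).surjective_rangeRestrict, fun Q hQ => ?_⟩
  -- `ker π = range (d (-1))`, and `hlift` at `-2` is the `Hom(−, Q)`-exactness at `P (-1)`.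
  have hrange : LinearMap.range (d (-2 + 1)) = LinearMap.ker π := by
    rw [hker]; exact hexact (-1)
  exact LinearMap.exists_comp_subtype_eq_of_range_eq (d (-2)) (d (-2 + 1))
    (LinearMap.range_le_ker_iff.mp (hexact (-2)).le) (hlift Q hQ (-2)) hrange

theorem gorensteinProjective_lift_to_trivial_extension_general
    (R : Type u) [CommRing R] (M P Q : ModuleCat.{v} R)
    (hM : IsGorensteinProjective R M)
    (hQ : Module.Projective R Q)
    (α : M →ₗ[R] P) (β : P →ₗ[R] M)
    (hα : Function.Injective α) (hβ : Function.Surjective β)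
    (hexact : LinearMap.range α = LinearMap.ker β)
    (u : M →ₗ[R] Q) :
    ∃ γ : P →ₗ[R] (Q × Q),
      γ ∘ₗ α = LinearMap.inl R Q Q ∘ₗ u ∧
      LinearMap.snd R Q Q ∘ₗ γ = u ∘ₗ β := by
  obtain ⟨F, π, hF, hπ, hext⟩ := hM.exists_surjective_extend_ker
  obtain ⟨γ, hγ⟩ := LinearMap.exists_comp_eq_of_extend_from_ker hα hβ hexact hπ (hext Q hQ) u
  have hβα : β ∘ₗ α = 0 := LinearMap.range_le_ker_iff.mp hexact.le
  refine ⟨γ.prod (u ∘ₗ β), ?_, rfl⟩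
  rw [LinearMap.prod_comp, hγ, LinearMap.comp_assoc, hβα, LinearMap.comp_zero]
  rfl

/-- Lemma 1.5: a map from a Gorenstein projective module in a short exact sequence
`0 → M → P → M → 0` with `P` projective lifts against the trivial extension `0 → Q → Q ⊕ Q → Q → 0`. -/
theorem gorensteinProjective_lift_to_trivial_extension
    (R : Type u) [CommRing R] (M P Q : ModuleCat.{v} R)
    (hM : IsGorensteinProjective R M)
    (hP : Module.Projective R P) (hQ : Module.Projective R Q)
    (α : M →ₗ[R] P) (β : P →ₗ[R] M)
    (hα : Function.Injective α) (hβ : Function.Surjective β)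
    (hexact : LinearMap.range α = LinearMap.ker β)
    (u : M →ₗ[R] Q) :
    ∃ γ : P →ₗ[R] (Q × Q),
      γ ∘ₗ α = LinearMap.inl R Q Q ∘ₗ u ∧
      LinearMap.snd R Q Q ∘ₗ γ = u ∘ₗ β :=
  gorensteinProjective_lift_to_trivial_extension_general R M P Q hM hQ α β hα hβ hexact u
end

section
/- Let R be a commutative ring. The following are equivalent: (1) every Gorenstein projective R-module is strongly Gorenstein projective; (2) for every R-module M with Gorenstein projective dimension Gpd_R(M) ≤ 1, there exists a short exact sequence 0 → M → Q → M → 0 of R-modules where Q has projective dimension pd_R(Q) ≤ 1. -/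
universe u v

/-!
(⇐) A Gorenstein projective `M` has `Gpd M ≤ 1`, so it sits in `0 → M → Q → M → 0` with
`pd Q ≤ 1`. As an extension of modules with `Ext¹(−, projective) = 0`, `Q` has the same
property, which forces the presentation `0 → K → G → Q → 0` by projectives to split; so `Q` is
projective and the sequence exhibits `M` as strongly Gorenstein projective.

(⇒) Take `0 → K → G → M → 0` with `G`, `K` Gorenstein projective, hence strongly so, and
`0 → G → P → G → 0`. The kernel `L` of `P → G → M` is an extension of `K` by `G`. Applying the
horseshoe lemma to the periodic resolutions of `G` and `K` shows that the class of such extensions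
is closed under syzygies and cosyzygies, so its members are Gorenstein projective. Hence `L` is
strongly Gorenstein projective, `0 → L → P' → L → 0`, and the horseshoe lemma for this sequence,
with both copies of `L` resolved by `0 → L → P → M → 0`, gives `0 → P' → P × P → Q → 0` with
`Q` an extension of `M` by `M`.
-/

section ShortExact

variable {R : Type*} [Ring R] {A B C D E : Type*} [AddCommGroup A] [AddCommGroup B]
  [AddCommGroup C] [AddCommGroup D] [AddCommGroup E] [Module R A] [Module R B] [Module R C]
  [Module R D] [Module R E]

theorem LinearMap.exists_comp_eq_of_surjective_of_ker_le {g : B →ₗ[R] C}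
    (hg : Function.Surjective g) {m : B →ₗ[R] D} (h : LinearMap.ker g ≤ LinearMap.ker m) :
    ∃ m' : C →ₗ[R] D, m' ∘ₗ g = m :=
  ⟨(LinearMap.ker g).liftQ m h ∘ₗ (g.quotKerEquivOfSurjective hg).symm.toLinearMap, by
    ext x; simp [LinearMap.quotKerEquivOfSurjective_symm_apply]⟩

theorem LinearMap.exists_comp_eq_of_injective_of_range_le {f : A →ₗ[R] B}
    (hf : Function.Injective f) {m : D →ₗ[R] B} (h : LinearMap.range m ≤ LinearMap.range f) :
    ∃ m' : D →ₗ[R] A, f ∘ₗ m' = m :=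
  ⟨(LinearEquiv.ofInjective f hf).symm.toLinearMap ∘ₗ m.codRestrict _ (fun x => h ⟨x, rfl⟩), by
    ext x; simp⟩

structure IsShortExact (f : A →ₗ[R] B) (g : B →ₗ[R] C) : Prop where
  injective : Function.Injective f
  exact : Function.Exact f g
  surjective : Function.Surjective g

namespace IsShortExact

variable {a : A →ₗ[R] B} {b : B →ₗ[R] C}

theorem of_range_eq_ker (ha : Function.Injective a) (hb : Function.Surjective b)
    (h : LinearMap.range a = LinearMap.ker b) : IsShortExact a b :=
  ⟨ha, LinearMap.exact_iff.mpr h.symm, hb⟩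

theorem range_eq_ker (h : IsShortExact a b) : LinearMap.range a = LinearMap.ker b :=
  h.exact.linearMap_ker_eq.symm

/-- `ker (e ∘ b)` is the pullback of `b` along `c`, as `range c = ker e`. -/
theorem exists_pullback (hab : IsShortExact a b) {c : D →ₗ[R] C} {e : C →ₗ[R] E}
    (hc : Function.Injective c) (hce : Function.Exact c e) :
    ∃ (a₁ : A →ₗ[R] LinearMap.ker (e ∘ₗ b)) (b₁ : LinearMap.ker (e ∘ₗ b) →ₗ[R] D),
      (LinearMap.ker (e ∘ₗ b)).subtype ∘ₗ a₁ = a ∧ IsShortExact a₁ b₁ := by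
  have hmem (x : A) : a x ∈ LinearMap.ker (e ∘ₗ b) := by
    simp [hab.exact.apply_apply_eq_zero]
  obtain ⟨b₁, hb₁⟩ : ∃ b₁ : LinearMap.ker (e ∘ₗ b) →ₗ[R] D,
      c ∘ₗ b₁ = b ∘ₗ (LinearMap.ker (e ∘ₗ b)).subtype := by
    refine LinearMap.exists_comp_eq_of_injective_of_range_le hc ?_
    rintro _ ⟨⟨y, hy⟩, rfl⟩
    exact (hce _).mp hy
  have hb₁ (y) : c (b₁ y) = b y := LinearMap.congr_fun hb₁ y
  refine ⟨a.codRestrict _ hmem, b₁, rfl, fun x y hxy => hab.injective congr($hxy.1), ?_, ?_⟩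
  · intro y
    rw [← hc.eq_iff, hb₁, map_zero, hab.exact]
    exact ⟨fun ⟨x, hx⟩ => ⟨x, Subtype.ext hx⟩, fun ⟨x, hx⟩ => ⟨x, congr($hx.1)⟩⟩
  · intro d
    obtain ⟨x, hx⟩ := hab.surjective (c d)
    refine ⟨⟨x, ?_⟩, hc ?_⟩
    · simp [hx, hce.apply_apply_eq_zero]
    · rw [hb₁, hx]

theorem subtype_ker (hb : Function.Surjective b) : IsShortExact (LinearMap.ker b).subtype b :=
  ⟨Submodule.injective_subtype _, LinearMap.exact_subtype_ker_map _, hb⟩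

end IsShortExact

end ShortExact

section Horseshoe

variable {R : Type*} [Ring R] {A B C A' C' PA PC : Type*} [AddCommGroup A] [AddCommGroup B]
  [AddCommGroup C] [AddCommGroup A'] [AddCommGroup C'] [AddCommGroup PA] [AddCommGroup PC]
  [Module R A] [Module R B] [Module R C] [Module R A'] [Module R C'] [Module R PA] [Module R PC]
  {u : A →ₗ[R] B} {v : B →ₗ[R] C}

namespace IsShortExact

theorem horseshoe_cokernel (huv : IsShortExact u v) {iA : A →ₗ[R] PA} {qA : PA →ₗ[R] A'}
    (hA : IsShortExact iA qA) {iC : C →ₗ[R] PC} {qC : PC →ₗ[R] C'} (hC : IsShortExact iC qC)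
    {w : B →ₗ[R] PA} (hw : w ∘ₗ u = iA) :
    Function.Injective (w.prod (iC ∘ₗ v)) ∧
      ∃ (u' : A' →ₗ[R] (PA × PC) ⧸ LinearMap.range (w.prod (iC ∘ₗ v)))
        (v' : (PA × PC) ⧸ LinearMap.range (w.prod (iC ∘ₗ v)) →ₗ[R] C'),
        IsShortExact u' v' := by
  set j := w.prod (iC ∘ₗ v)
  have hw' (a : A) : w (u a) = iA a := LinearMap.congr_fun hw a
  have hj_inl (x : PA) :
      ((x, 0) : PA × PC) ∈ LinearMap.range j ↔ x ∈ LinearMap.range iA := by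
    constructor
    · rintro ⟨b, hb⟩
      obtain ⟨a, rfl⟩ := (huv.exact b).mp (hC.injective (by simpa [j] using congr($hb.2)))
      exact ⟨a, by simpa [j, hw'] using congr($hb.1)⟩
    · rintro ⟨a, rfl⟩
      exact ⟨u a, by simp [j, hw', huv.exact.apply_apply_eq_zero]⟩
  refine ⟨(injective_iff_map_eq_zero j).mpr fun b hb => ?_, ?_⟩
  · obtain ⟨a, rfl⟩ := (huv.exact b).mp (hC.injective (by simpa [j] using congr($hb.2)))
    have : iA a = 0 := by simpa [j, hw'] using congr($hb.1)
    rw [hA.injective (this.trans (map_zero iA).symm), map_zero]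
  obtain ⟨u', hu'⟩ := LinearMap.exists_comp_eq_of_surjective_of_ker_le hA.surjective
    (m := (LinearMap.range j).mkQ ∘ₗ LinearMap.inl R PA PC) (by
      intro x hx
      simpa [hj_inl] using (hA.exact x).mp hx)
  have hu' (x : PA) : u' (qA x) = (LinearMap.range j).mkQ (x, 0) := LinearMap.congr_fun hu' x
  let v' := (LinearMap.range j).liftQ (qC ∘ₗ LinearMap.snd R PA PC) (by
    rintro _ ⟨b, rfl⟩
    simp [j, hC.exact.apply_apply_eq_zero])
  refine ⟨u', v', ?_, ?_, ?_⟩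
  · rw [← LinearMap.ker_eq_bot, eq_bot_iff]
    intro y hy
    obtain ⟨x, rfl⟩ := hA.surjective y
    rw [LinearMap.mem_ker, hu', Submodule.mkQ_apply, Submodule.Quotient.mk_eq_zero, hj_inl] at hy
    exact (hA.exact x).mpr hy
  · intro y
    obtain ⟨⟨x, z⟩, rfl⟩ := Submodule.mkQ_surjective _ y
    constructor
    · intro hz
      obtain ⟨c, rfl⟩ := (hC.exact z).mp hz
      obtain ⟨b, rfl⟩ := huv.surjective c
      refine ⟨qA (x - w b), ?_⟩
      rw [hu', Submodule.mkQ_apply, Submodule.mkQ_apply, Submodule.Quotient.eq]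
      exact ⟨-b, by simp [j]⟩
    · rintro ⟨y, hy⟩
      obtain ⟨x', rfl⟩ := hA.surjective y
      rw [← hy, hu']
      simp [v']
  · intro c'
    obtain ⟨z, rfl⟩ := hC.surjective c'
    exact ⟨(LinearMap.range j).mkQ (0, z), rfl⟩

theorem horseshoe_kernel (huv : IsShortExact u v) {iA : A' →ₗ[R] PA} {qA : PA →ₗ[R] A}
    (hA : IsShortExact iA qA) {iC : C' →ₗ[R] PC} {qC : PC →ₗ[R] C} (hC : IsShortExact iC qC)
    {ω : PC →ₗ[R] B} (hω : v ∘ₗ ω = qC) :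
    Function.Surjective ((u ∘ₗ qA).coprod ω) ∧
      ∃ (u' : A' →ₗ[R] LinearMap.ker ((u ∘ₗ qA).coprod ω))
        (v' : LinearMap.ker ((u ∘ₗ qA).coprod ω) →ₗ[R] C'), IsShortExact u' v' := by
  set p := (u ∘ₗ qA).coprod ω
  have hp (x : PA) (z : PC) : p (x, z) = u (qA x) + ω z := rfl
  have hω' (z : PC) : v (ω z) = qC z := LinearMap.congr_fun hω z
  have hvp (x : PA) (z : PC) : v (p (x, z)) = qC z := by
    simp [hp, huv.exact.apply_apply_eq_zero, hω']
  refine ⟨fun b => ?_, ?_⟩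
  · obtain ⟨z, hz⟩ := hC.surjective (v b)
    obtain ⟨a, ha⟩ := (huv.exact (b - ω z)).mp (by simp [hω', hz])
    obtain ⟨x, rfl⟩ := hA.surjective a
    exact ⟨(x, z), by rw [hp, ha, sub_add_cancel]⟩
  obtain ⟨v', hv'⟩ := LinearMap.exists_comp_eq_of_injective_of_range_le hC.injective
    (m := LinearMap.snd R PA PC ∘ₗ (LinearMap.ker p).subtype) (by
      rintro _ ⟨⟨⟨x, z⟩, hxz⟩, rfl⟩
      refine (hC.exact z).mp ?_
      rw [← hvp, LinearMap.mem_ker.mp hxz, map_zero])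
  have hv' (y : LinearMap.ker p) : iC (v' y) = (y : PA × PC).2 := LinearMap.congr_fun hv' y
  have hmem (a : A') : ((iA a, 0) : PA × PC) ∈ LinearMap.ker p := by
    simp [hp, hA.exact.apply_apply_eq_zero]
  refine ⟨(LinearMap.inl R PA PC ∘ₗ iA).codRestrict _ hmem, v',
    fun a a' haa' => hA.injective congr($haa'.1.1), fun y => ?_, fun c => ?_⟩
  · obtain ⟨⟨x, z⟩, hxz⟩ := y
    rw [← hC.injective.eq_iff, hv', map_zero]
    constructor
    · rintro rfl
      have : u (qA x) = 0 := by simpa [hp] using hxz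
      obtain ⟨a, rfl⟩ := (hA.exact x).mp ((injective_iff_map_eq_zero u).mp huv.injective _ this)
      exact ⟨a, Subtype.ext rfl⟩
    · rintro ⟨a, ha⟩
      rw [← congrArg (fun y : LinearMap.ker p => (y : PA × PC).2) ha]
      rfl
  · obtain ⟨a, ha⟩ := (huv.exact (ω (iC c))).mp (by rw [hω', hC.exact.apply_apply_eq_zero])
    obtain ⟨x, rfl⟩ := hA.surjective a
    refine ⟨⟨(-x, iC c), by simp [hp, ha]⟩, hC.injective ?_⟩
    rw [hv']

end IsShortExact

end Horseshoe

theorem exists_int_chain {α : Type*} {C : α → Prop} {r : α → α → Prop}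
    (hnext : ∀ a, C a → ∃ b, C b ∧ r a b) (hprev : ∀ b, C b → ∃ a, C a ∧ r a b)
    {a₀ : α} (h₀ : C a₀) :
    ∃ f : ℤ → α, f 0 = a₀ ∧ ∀ i, C (f i) ∧ r (f i) (f (i + 1)) := by
  choose next hnextC hnextr using hnext
  choose prev hprevC hprevr using hprev
  let fwd (n : ℕ) : {a // C a} := n.rec ⟨a₀, h₀⟩ fun _ x => ⟨next x.1 x.2, hnextC _ _⟩
  let bwd (n : ℕ) : {a // C a} := n.rec ⟨a₀, h₀⟩ fun _ x => ⟨prev x.1 x.2, hprevC _ _⟩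
  refine ⟨fun | .ofNat n => (fwd n).1 | .negSucc n => (bwd (n + 1)).1, rfl, ?_⟩
  rintro (n | _ | n)
  · exact ⟨(fwd n).2, hnextr _ _⟩
  · exact ⟨(bwd 1).2, hprevr _ _⟩
  · exact ⟨(bwd (n + 2)).2, hprevr _ _⟩

section Gorenstein

variable {R : Type u} [CommRing R]

variable (R) in
def IsExtension (A B C : ModuleCat.{v} R) : Prop :=
  ∃ (f : A →ₗ[R] B) (g : B →ₗ[R] C), IsShortExact f g

variable (R) in
def IsCosyzygy (N N' : ModuleCat.{v} R) : Prop :=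
  ∃ P : ModuleCat.{v} R, Module.Projective R P ∧ IsExtension R N P N'

variable (R) in
/-- `Ext¹(N, Q) = 0` for every projective `Q`, in the form of an extension property. -/
def ExtOneProjVanishes (N : ModuleCat.{v} R) : Prop :=
  ∀ ⦃A X : ModuleCat.{v} R⦄ (ι : A →ₗ[R] X) (π : X →ₗ[R] N), IsShortExact ι π →
    ∀ (Q : ModuleCat.{v} R), Module.Projective R Q →
      ∀ g : A →ₗ[R] Q, ∃ h : X →ₗ[R] Q, h ∘ₗ ι = g

theorem IsGorensteinProjective.extOneProjVanishes {N : ModuleCat.{v} R}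
    (hN : IsGorensteinProjective R N) : ExtOneProjVanishes R N := by
  obtain ⟨P, d, hP, hd, ⟨e⟩, hhom⟩ := hN
  intro A X ι π hιπ Q hQ g
  have hd' (i : ℤ) : Function.Exact (d i) (d (i + 1)) := LinearMap.exact_iff.mpr (hd i).symm
  let p : P 0 →ₗ[R] N := e.symm.toLinearMap ∘ₗ (d 0).rangeRestrict
  have hp : Function.Surjective p := e.symm.surjective.comp (d 0).surjective_rangeRestrict
  have hker_p : LinearMap.ker p = LinearMap.range (d (-1)) := by
    rw [LinearMap.ker_comp, LinearEquiv.ker, Submodule.comap_bot, LinearMap.ker_rangeRestrict]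
    exact hd (-1) |>.symm
  obtain ⟨γ, hγ⟩ := Module.projective_lifting_property π p hιπ.surjective
  obtain ⟨g₁, hg₁⟩ : ∃ g₁ : P (-1) →ₗ[R] A, ι ∘ₗ g₁ = γ ∘ₗ d (-1) := by
    refine LinearMap.exists_comp_eq_of_injective_of_range_le hιπ.injective ?_
    rintro _ ⟨y, rfl⟩
    refine (hιπ.exact _).mp ?_
    have : d (-1) y ∈ LinearMap.ker p := hker_p ▸ LinearMap.mem_range_self _ y
    simpa [← hγ] using this
  -- `Hom(−, Q)` is exact at `P (-1)`, so `g ∘ g₁` extends along `d (-1)`.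
  obtain ⟨h₀, hh₀⟩ : ∃ h₀ : P 0 →ₗ[R] Q, h₀ ∘ₗ d (-1) = g ∘ₗ g₁ := by
    refine hhom Q hQ (-2) _ (LinearMap.ext fun y => ?_)
    have : ι (g₁ (d (-2) y)) = 0 := by
      simpa using congr($hg₁ (d (-2) y)).trans (congrArg γ ((hd' (-2)).apply_apply_eq_zero y))
    simp [hιπ.injective (this.trans (map_zero ι).symm)]
  -- `h` is defined on `X` through the surjection `A × P 0 → X`.
  have hσ : Function.Surjective (ι.coprod γ) := by
    intro x
    obtain ⟨y, hy⟩ := hp (π x)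
    obtain ⟨a, ha⟩ := (hιπ.exact (x - γ y)).mp (by simp [← hy, ← hγ])
    exact ⟨(a, y), by simp [ha]⟩
  obtain ⟨h, hh⟩ := LinearMap.exists_comp_eq_of_surjective_of_ker_le hσ
    (m := g.coprod h₀) (by
      rintro ⟨a, y⟩ hay
      simp only [LinearMap.mem_ker, LinearMap.coprod_apply] at hay ⊢
      have hy : y ∈ LinearMap.ker p := by
        simpa [← hγ, hιπ.exact.apply_apply_eq_zero] using congr(π $hay)
      rw [hker_p] at hy
      obtain ⟨z, rfl⟩ := hy
      have ha : a = -g₁ z := hιπ.injective (by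
        rw [map_neg, ← LinearMap.comp_apply ι, hg₁, eq_neg_iff_add_eq_zero]
        exact hay)
      rw [ha, ← LinearMap.comp_apply h₀, hh₀]
      simp)
  exact ⟨h, LinearMap.ext fun a => by simpa using congr($hh (a, 0))⟩

theorem ExtOneProjVanishes.of_isShortExact {X E Y : ModuleCat.{v} R} {u : X →ₗ[R] E}
    {v : E →ₗ[R] Y} (huv : IsShortExact u v) (hX : ExtOneProjVanishes R X)
    (hY : ExtOneProjVanishes R Y) : ExtOneProjVanishes R E := by
  intro Z V μ τ hμτ Q hQ g
  obtain ⟨μ₁, τ₁, hμ₁, hμτ₁⟩ := hμτ.exists_pullback huv.injective huv.exact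
  obtain ⟨h₁, hh₁⟩ :=
    hX (X := ModuleCat.of R (LinearMap.ker (v ∘ₗ τ))) μ₁ τ₁ hμτ₁ Q hQ g
  obtain ⟨h, hh⟩ := hY (A := ModuleCat.of R (LinearMap.ker (v ∘ₗ τ))) _ _
    (IsShortExact.subtype_ker (huv.surjective.comp hμτ.surjective)) Q hQ h₁
  exact ⟨h, by rw [← hμ₁, ← LinearMap.comp_assoc, hh, hh₁]⟩

theorem ExtOneProjVanishes.projective_of_projDimLE_one {Q : ModuleCat.{v} R}
    (hQ : ExtOneProjVanishes R Q) (h : ProjDimLE R 1 Q) : Module.Projective R Q := by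
  obtain ⟨G, K, f, g, hG, hf, hg, hfg, hK⟩ := h
  have hfg' := IsShortExact.of_range_eq_ker hf hg hfg
  obtain ⟨r, hr⟩ := hQ f g hfg' K hK LinearMap.id
  have hsplit := (hfg'.exact.split_tfae hf hg).out 1 0
  obtain ⟨s, hs⟩ := hsplit.mp ⟨r, hr⟩
  exact Module.Projective.of_split s g hs

theorem isStronglyGorensteinProjective_of_isShortExact {M P : ModuleCat.{v} R}
    [Module.Projective R P] {f : M →ₗ[R] P} {g : P →ₗ[R] M} (hfg : IsShortExact f g)
    (hM : ExtOneProjVanishes R M) : IsStronglyGorensteinProjective R M := by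
  have hrange : LinearMap.range (f ∘ₗ g) = LinearMap.range f :=
    LinearMap.range_comp_of_range_eq_top _ (LinearMap.range_eq_top.mpr hfg.surjective)
  have hker : LinearMap.ker (f ∘ₗ g) = LinearMap.ker g :=
    LinearMap.ker_comp_of_ker_eq_bot _ (LinearMap.ker_eq_bot.mpr hfg.injective)
  refine ⟨P, f ∘ₗ g, inferInstance, by rw [hrange, hker, hfg.range_eq_ker],
    ⟨(LinearEquiv.ofInjective f hfg.injective).trans (LinearEquiv.ofEq _ _ hrange.symm)⟩, ?_⟩
  intro Q hQ t ht
  obtain ⟨t', ht'⟩ := LinearMap.exists_comp_eq_of_surjective_of_ker_le hfg.surjective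
    (m := t) (by
    rw [← hfg.range_eq_ker]
    rintro _ ⟨m, rfl⟩
    obtain ⟨x, rfl⟩ := hfg.surjective m
    exact congr($ht x))
  obtain ⟨h, hh⟩ := hM f g hfg Q hQ t'
  exact ⟨h, by rw [← LinearMap.comp_assoc, hh, ht']⟩

theorem IsStronglyGorensteinProjective.isGorensteinProjective {M : ModuleCat.{v} R}
    (h : IsStronglyGorensteinProjective R M) : IsGorensteinProjective R M := by
  obtain ⟨P, f, hP, hf, e, hhom⟩ := h
  exact ⟨fun _ => P, fun _ => f, fun _ => hP, fun _ => hf, e, fun Q hQ _ g hg => hhom Q hQ g hg⟩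

theorem IsStronglyGorensteinProjective.isCosyzygy_self {M : ModuleCat.{v} R}
    (h : IsStronglyGorensteinProjective R M) : IsCosyzygy R M M := by
  obtain ⟨P, f, hP, hf, ⟨e⟩, -⟩ := h
  refine ⟨P, hP, (LinearMap.range f).subtype ∘ₗ e.toLinearMap,
    e.symm.toLinearMap ∘ₗ f.rangeRestrict,
    ⟨(Submodule.injective_subtype _).comp e.injective, ?_,
      e.symm.surjective.comp f.surjective_rangeRestrict⟩⟩
  rw [LinearMap.exact_iff, LinearMap.ker_comp, LinearEquiv.ker, Submodule.comap_bot,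
    LinearMap.ker_rangeRestrict, LinearMap.range_comp, LinearEquiv.range, Submodule.map_top,
    Submodule.range_subtype, hf]

theorem isGorensteinProjective_of_subsingleton (M : ModuleCat.{v} R) [Subsingleton M] :
    IsGorensteinProjective R M :=
  ⟨fun _ => M, fun _ => 0, fun _ => Module.Projective.of_free, fun _ => Subsingleton.elim _ _,
    ⟨LinearEquiv.ofSubsingleton _ _⟩, fun _ _ _ _ _ => ⟨0, Subsingleton.elim _ _⟩⟩

theorem IsGorensteinProjective.gorensteinProjDimLE_one {M : ModuleCat.{v} R}
    (hM : IsGorensteinProjective R M) : GorensteinProjDimLE R 1 M :=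
  ⟨M, ModuleCat.of R PUnit, 0, LinearMap.id, hM, fun _ _ _ => Subsingleton.elim _ _,
    Function.surjective_id, by simp, isGorensteinProjective_of_subsingleton _⟩

theorem IsCosyzygy.projDimLE_one {P Q : ModuleCat.{v} R} [Module.Projective R P]
    (h : IsCosyzygy R P Q) : ProjDimLE R 1 Q := by
  obtain ⟨P', hP', f, g, hfg⟩ := h
  exact ⟨P', P, f, g, hP', hfg.injective, hfg.surjective, hfg.range_eq_ker,
    ‹Module.Projective R P›⟩

theorem isGorensteinProjective_of_chain (N : ℤ → ModuleCat.{v} R)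
    (hN : ∀ i, IsCosyzygy R (N i) (N (i + 1))) (hext : ∀ i, ExtOneProjVanishes R (N i)) :
    IsGorensteinProjective R (N 1) := by
  choose P hP ι π hιπ using hN
  let d (i : ℤ) : P i →ₗ[R] P (i + 1) := ι (i + 1) ∘ₗ π i
  have hrange (i : ℤ) : LinearMap.range (d i) = LinearMap.range (ι (i + 1)) :=
    LinearMap.range_comp_of_range_eq_top _ (LinearMap.range_eq_top.mpr (hιπ i).surjective)
  have hker (i : ℤ) : LinearMap.ker (d i) = LinearMap.ker (π i) :=
    LinearMap.ker_comp_of_ker_eq_bot _ (LinearMap.ker_eq_bot.mpr (hιπ (i + 1)).injective)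
  refine ⟨P, d, hP, fun i => by rw [hrange, hker, (hιπ (i + 1)).range_eq_ker],
    ⟨(LinearEquiv.ofInjective _ (hιπ 1).injective).trans
      (LinearEquiv.ofEq _ _ (hrange 0).symm)⟩, fun Q hQ i g hg => ?_⟩
  obtain ⟨g', hg'⟩ :=
    LinearMap.exists_comp_eq_of_surjective_of_ker_le (hιπ (i + 1)).surjective (m := g) (by
      rw [← (hιπ (i + 1)).range_eq_ker, ← hrange i]
      rintro _ ⟨x, rfl⟩
      exact congr($hg x))
  obtain ⟨h, hh⟩ := hext (i + 1 + 1 + 1) _ _ (hιπ (i + 1 + 1)) Q hQ g'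
  exact ⟨h, by rw [← hg', ← hh]; rfl⟩

theorem isGorensteinProjective_of_syzygy_closed {C : ModuleCat.{v} R → Prop}
    (hext : ∀ N, C N → ExtOneProjVanishes R N)
    (hcosyz : ∀ N, C N → ∃ N', C N' ∧ IsCosyzygy R N N')
    (hsyz : ∀ N', C N' → ∃ N, C N ∧ IsCosyzygy R N N') {N : ModuleCat.{v} R} (hN : C N) :
    IsGorensteinProjective R N := by
  obtain ⟨f, rfl, hf⟩ := exists_int_chain hcosyz hsyz hN
  simpa using isGorensteinProjective_of_chain (fun i => f (i - 1))
    (fun i => by simpa using (hf (i - 1)).2) (fun i => hext _ (hf _).1)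

theorem IsExtension.exists_cosyzygy {A B C A' C' : ModuleCat.{v} R} (hB : IsExtension R A B C)
    (hA : IsCosyzygy R A A') (hC : IsCosyzygy R C C') (hCext : ExtOneProjVanishes R C) :
    ∃ B', IsExtension R A' B' C' ∧ IsCosyzygy R B B' := by
  obtain ⟨u, v, huv⟩ := hB
  obtain ⟨PA, hPA, iA, qA, hA⟩ := hA
  obtain ⟨PC, hPC, iC, qC, hC⟩ := hC
  obtain ⟨w, hw⟩ := hCext u v huv PA hPA iA
  obtain ⟨hj, u', v', hu'v'⟩ := huv.horseshoe_cokernel hA hC hw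
  exact ⟨ModuleCat.of R (_ ⧸ LinearMap.range (w.prod (iC ∘ₗ v))), ⟨u', v', hu'v'⟩,
    ModuleCat.of R (PA × PC), inferInstanceAs (Module.Projective R (PA × PC)), _, _,
    hj, LinearMap.exact_map_mkQ_range _, Submodule.mkQ_surjective _⟩

theorem IsExtension.exists_syzygy {A' B C' A C : ModuleCat.{v} R} (hB : IsExtension R A B C)
    (hA : IsCosyzygy R A' A) (hC : IsCosyzygy R C' C) :
    ∃ B', IsExtension R A' B' C' ∧ IsCosyzygy R B' B := by
  obtain ⟨u, v, huv⟩ := hB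
  obtain ⟨PA, hPA, iA, qA, hA⟩ := hA
  obtain ⟨PC, hPC, iC, qC, hC⟩ := hC
  obtain ⟨ω, hω⟩ := Module.projective_lifting_property v qC huv.surjective
  obtain ⟨hp, u', v', hu'v'⟩ := huv.horseshoe_kernel hA hC hω
  exact ⟨ModuleCat.of R (LinearMap.ker ((u ∘ₗ qA).coprod ω)), ⟨u', v', hu'v'⟩,
    ModuleCat.of R (PA × PC), inferInstanceAs (Module.Projective R (PA × PC)), _, _,
    IsShortExact.subtype_ker hp⟩

theorem IsExtension.isGorensteinProjective {G B K : ModuleCat.{v} R} (hB : IsExtension R G B K)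
    (hG : IsStronglyGorensteinProjective R G) (hK : IsStronglyGorensteinProjective R K) :
    IsGorensteinProjective R B := by
  have hGext := hG.isGorensteinProjective.extOneProjVanishes
  have hKext := hK.isGorensteinProjective.extOneProjVanishes
  refine isGorensteinProjective_of_syzygy_closed (C := fun B => IsExtension R G B K) ?_ ?_ ?_ hB
  · rintro N ⟨u, v, huv⟩
    exact ExtOneProjVanishes.of_isShortExact huv hGext hKext
  · exact fun N hN => hN.exists_cosyzygy hG.isCosyzygy_self hK.isCosyzygy_self hKext
  · exact fun N hN => hN.exists_syzygy hG.isCosyzygy_self hK.isCosyzygy_self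

end Gorenstein

/-- Theorem 2.1: every Gorenstein projective `R`-module is strongly Gorenstein projective iff
every module of Gorenstein projective dimension `≤ 1` fits in a short exact sequence
`0 → M → Q → M → 0` with `pd Q ≤ 1`. -/
theorem forall_gorensteinProjective_stronglyGorensteinProjective_iff
    (R : Type u) [CommRing R] :
    (∀ M : ModuleCat.{v} R,
        IsGorensteinProjective R M → IsStronglyGorensteinProjective R M) ↔
    (∀ M : ModuleCat.{v} R, GorensteinProjDimLE R 1 M →
        ∃ (Q : ModuleCat.{v} R) (f : M →ₗ[R] Q) (g : Q →ₗ[R] M),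
          ProjDimLE R 1 Q ∧ Function.Injective f ∧ Function.Surjective g ∧
          LinearMap.range f = LinearMap.ker g) := by
  refine ⟨fun H M hM => ?_, fun H M hM => ?_⟩
  · obtain ⟨G, K, fK, gM, hG, hfK, hgM, hfg, hK⟩ := hM
    obtain ⟨P, hP, iG, q, hiGq⟩ := (H G hG).isCosyzygy_self
    obtain ⟨a, b, -, hab⟩ :=
      hiGq.exists_pullback hfK (IsShortExact.of_range_eq_ker hfK hgM hfg).exact
    let L := ModuleCat.of R (LinearMap.ker (gM ∘ₗ q))
    have hL : IsStronglyGorensteinProjective R L :=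
      H L (IsExtension.isGorensteinProjective ⟨a, b, hab⟩ (H G hG) (H K hK))
    have hLM : IsCosyzygy R L M :=
      ⟨P, hP, _, _, IsShortExact.subtype_ker (hgM.comp hiGq.surjective)⟩
    obtain ⟨PL, hPL, hLPL⟩ := hL.isCosyzygy_self
    obtain ⟨Q, ⟨f, g, hfg⟩, hQ⟩ :=
      hLPL.exists_cosyzygy hLM hLM hL.isGorensteinProjective.extOneProjVanishes
    exact ⟨Q, f, g, hQ.projDimLE_one, hfg.injective, hfg.surjective, hfg.range_eq_ker⟩
  · obtain ⟨Q, f, g, hQ, hf, hg, hfg⟩ := H M hM.gorensteinProjDimLE_one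
    have hfg := IsShortExact.of_range_eq_ker hf hg hfg
    have hMext := hM.extOneProjVanishes
    have hQproj := (hMext.of_isShortExact hfg hMext).projective_of_projDimLE_one hQ
    exact isStronglyGorensteinProjective_of_isShortExact hfg hMext
end

section
/- Let D be a principal ideal domain and let 𝒫 be a nonzero prime ideal of D. Then every Gorenstein projective module over the quotient ring R = D/𝒫² is strongly Gorenstein projective. -/
universe u v

/-!
Let `π` be the image in `R = D ⧸ P ^ 2` of a generator `p` of `P`. Then `(π)` is the maximal
ideal of `R` and `ann π = (π)`. Over such a ring:

* every projective module `Q` satisfies Baer's criterion, the only ideals being `0`, `(π)` and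
  `R` (a map `(π) → Q` sends `π` into `ker π = π Q`); hence the `Hom(−, Q)`-exactness required
  of a strongly Gorenstein projective module holds as soon as `range f = ker f`;
* every module is `M ≅ R^(I) ⊕ k^(J)` with `k = R ⧸ (π)`: lift a `k`-basis of `π M` to get the
  free summand, and a `k`-basis of `ker π ⧸ π M` to get the rest;
* `R^(I) ⊕ k^(J)` is the range of `f (x, y, z) = (y, 0, π z)` on `R^(I) ⊕ R^(I) ⊕ R^(J)`, and
  `range f = ker f`.

So every `R`-module, Gorenstein projective or not, is strongly Gorenstein projective.
-/

open LinearMap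

variable {R : Type u} [CommRing R]

theorem exists_comp_eq_of_range_eq_ker {P Q : Type*} [AddCommGroup P] [Module R P]
    [AddCommGroup Q] [Module R Q] (hQ : Module.Baer R Q) {f : P →ₗ[R] P}
    (hf : range f = ker f) (g : P →ₗ[R] Q) (hg : g ∘ₗ f = 0) : ∃ h : P →ₗ[R] Q, h ∘ₗ f = g := by
  have hle : ker f ≤ ker g := hf ▸ range_le_ker_iff.mpr hg
  obtain ⟨h, hh⟩ := hQ.extension_property ((ker f).liftQ f le_rfl)
    (ker_eq_bot.mp (Submodule.ker_liftQ_eq_bot _ _ _ le_rfl)) ((ker f).liftQ g hle)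
  exact ⟨h, by ext x; exact congrArg (· (Submodule.mkQ _ x)) hh⟩

theorem isStronglyGorensteinProjective_of_ker_eq
    (hbaer : ∀ Q : ModuleCat.{v} R, Module.Projective R Q → Module.Baer R Q)
    {M : ModuleCat.{v} R} {P : Type w} [AddCommGroup P] [Module R P] [Module.Projective R P]
    [Small.{v} P] (f : P →ₗ[R] P) (hf : range f = ker f) (Φ : P →ₗ[R] M)
    (hΦ : Function.Surjective Φ) (hker : ker Φ = ker f) :
    IsStronglyGorensteinProjective R M := by
  let e : P ≃ₗ[R] Shrink.{v} P := (Shrink.linearEquiv R P).symm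
  have : Module.Projective R (Shrink.{v} P) := .of_equiv e
  have hker' : ker (Φ ∘ₗ e.symm.toLinearMap) = ker (e.conj f) := by
    rw [LinearEquiv.conj_apply, comp_assoc, LinearEquiv.ker_comp, ker_comp, ker_comp, hker]
  have hf' : range (e.conj f) = ker (e.conj f) := by
    rw [LinearEquiv.conj_apply, comp_assoc, LinearEquiv.ker_comp, range_comp,
      range_comp_of_range_eq_top _ (LinearEquiv.range _), hf, ker_comp,
      Submodule.map_equiv_eq_comap_symm]
  refine ⟨ModuleCat.of R (Shrink.{v} P), e.conj f, ‹_›, hf', ⟨?_⟩,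
    fun Q hQ g hg => exists_comp_eq_of_range_eq_ker (hbaer Q hQ) hf' g hg⟩
  exact ((Φ ∘ₗ e.symm.toLinearMap).quotKerEquivOfSurjective
    (hΦ.comp e.symm.surjective)).symm ≪≫ₗ Submodule.quotEquivOfEq _ _ hker' ≪≫ₗ
    (e.conj f).quotKerEquivRange

section AnnihilatorEqSpan

variable {π : R}

theorem mul_self_eq_zero_of_ann_eq_span (hann : ∀ x, π * x = 0 ↔ x ∈ Ideal.span {π}) :
    π * π = 0 :=
  (hann π).2 (Ideal.mem_span_singleton_self π)

theorem Finsupp.smul_eq_zero_iff_forall_mem {ι : Type*}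
    (hann : ∀ x, π * x = 0 ↔ x ∈ Ideal.span {π}) (z : ι →₀ R) :
    π • z = 0 ↔ ∀ i, z i ∈ Ideal.span {π} := by
  simp only [Finsupp.ext_iff, Finsupp.smul_apply, smul_eq_mul, Finsupp.coe_zero,
    Pi.zero_apply, hann]

theorem ker_lsmul_le_range_lsmul_finsupp {ι : Type*}
    (hann : ∀ x, π * x = 0 ↔ x ∈ Ideal.span {π}) :
    ker (lsmul R (ι →₀ R) π) ≤ range (lsmul R (ι →₀ R) π) := by
  intro z hz
  rw [mem_ker, lsmul_apply, Finsupp.smul_eq_zero_iff_forall_mem hann] at hz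
  rw [← z.sum_single]
  refine Submodule.finsuppSum_mem _ _ _ _ fun i _ => ?_
  obtain ⟨c, hc⟩ := Ideal.mem_span_singleton'.mp (hz i)
  exact ⟨Finsupp.single i c, by simp [← hc, Finsupp.smul_single, mul_comm]⟩

theorem range_lsmul_eq_ker {Q : Type*} [AddCommGroup Q] [Module R Q] [Module.Projective R Q]
    (hann : ∀ x, π * x = 0 ↔ x ∈ Ideal.span {π}) :
    range (lsmul R Q π) = ker (lsmul R Q π) := by
  refine le_antisymm ?_ fun q hq => ?_
  · rintro _ ⟨q, rfl⟩
    simp [smul_smul, mul_self_eq_zero_of_ann_eq_span hann]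
  · obtain ⟨s, hs⟩ := Module.projective_def'.mp ‹Module.Projective R Q›
    have hsq : s q ∈ ker (lsmul R (Q →₀ R) π) := by simpa using congrArg s hq
    obtain ⟨y, hy⟩ := ker_lsmul_le_range_lsmul_finsupp hann hsq
    refine ⟨Finsupp.linearCombination R id y, ?_⟩
    have := congrArg (Finsupp.linearCombination R id) hy
    simp only [lsmul_apply, map_smul] at this
    rw [lsmul_apply, this]
    exact congrArg (· q) hs

theorem isUnit_of_notMem_span (hsq : π * π = 0) (hmax : (Ideal.span {π}).IsMaximal) {x : R}
    (hx : x ∉ Ideal.span {π}) : IsUnit x := by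
  obtain ⟨y, i, hi, hxy⟩ := hmax.exists_inv hx
  obtain ⟨c, rfl⟩ := Ideal.mem_span_singleton'.mp hi
  refine .of_mul_eq_one (y * (1 + c * π)) ?_
  linear_combination (1 + c * π) * hxy - c ^ 2 * hsq

theorem Ideal.eq_bot_or_eq_span_or_eq_top (hsq : π * π = 0) (hmax : (Ideal.span {π}).IsMaximal)
    (I : Ideal R) : I = ⊥ ∨ I = Ideal.span {π} ∨ I = ⊤ := by
  by_cases hle : I ≤ Ideal.span {π}
  · refine or_iff_not_imp_left.mpr fun hI => .inl (le_antisymm hle ?_)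
    obtain ⟨y, hyI, hy0⟩ := (Submodule.ne_bot_iff I).mp hI
    obtain ⟨c, rfl⟩ := Ideal.mem_span_singleton'.mp (hle hyI)
    have hc : c ∉ Ideal.span {π} := fun hc => by
      obtain ⟨d, rfl⟩ := Ideal.mem_span_singleton'.mp hc
      exact hy0 (by rw [mul_assoc, hsq, mul_zero])
    rw [Ideal.span_singleton_le_iff_mem,
      ← I.unit_mul_mem_iff_mem (isUnit_of_notMem_span hsq hmax hc)]
    exact hyI
  · obtain ⟨x, hxI, hx⟩ := SetLike.not_le_iff_exists.mp hle
    exact .inr (.inr (I.eq_top_of_isUnit_mem hxI (isUnit_of_notMem_span hsq hmax hx)))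

theorem baer_of_projective (hann : ∀ x, π * x = 0 ↔ x ∈ Ideal.span {π})
    (hmax : (Ideal.span {π}).IsMaximal) (Q : Type*) [AddCommGroup Q] [Module R Q]
    [Module.Projective R Q] : Module.Baer R Q := by
  have hsq := mul_self_eq_zero_of_ann_eq_span hann
  intro I g
  rcases Ideal.eq_bot_or_eq_span_or_eq_top hsq hmax I with rfl | rfl | rfl
  · refine ⟨0, fun x hx => ?_⟩
    obtain rfl := (Submodule.mem_bot R).mp hx
    exact g.map_zero.symm
  · have hπ : π • g ⟨π, Ideal.mem_span_singleton_self π⟩ = 0 := by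
      rw [← map_smul]; simp only [SetLike.mk_smul_mk, smul_eq_mul, hsq]; exact g.map_zero
    obtain ⟨q, hq : π • q = _⟩ := (range_lsmul_eq_ker hann (Q := Q)).ge hπ
    refine ⟨toSpanSingleton R Q q, fun x hx => ?_⟩
    obtain ⟨c, rfl⟩ := Ideal.mem_span_singleton'.mp hx
    rw [toSpanSingleton_apply, mul_smul, hq, ← map_smul]
    rfl
  · exact ⟨g ∘ₗ (LinearEquiv.ofTop ⊤ rfl).symm.toLinearMap, fun x hx => rfl⟩

theorem small_of_nontrivial (hann : ∀ x, π * x = 0 ↔ x ∈ Ideal.span {π})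
    (hmax : (Ideal.span {π}).IsMaximal) (M : Type v) [AddCommGroup M] [Module R M]
    [Nontrivial M] : Small.{v} R := by
  obtain ⟨m, hm0, hm⟩ : ∃ m : M, m ≠ 0 ∧ π • m = 0 := by
    obtain ⟨m, hm⟩ := exists_ne (0 : M)
    by_cases hπm : π • m = 0
    · exact ⟨m, hm, hπm⟩
    · exact ⟨π • m, hπm, by
      rw [smul_smul, mul_self_eq_zero_of_ann_eq_span hann, zero_smul]⟩
  have hker : ker (toSpanSingleton R M m) = Ideal.span {π} := by
    refine (hmax.eq_of_le ?_ ?_).symm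
    · exact fun h => hm0 (by simpa using h.ge (Submodule.mem_top (x := (1 : R))))
    · exact (Ideal.span_singleton_le_iff_mem _).mpr hm
  have : Small.{v} (R ⧸ Ideal.span {π}) :=
    small_of_injective (hker ▸ (toSpanSingleton R M m).quotKerEquivRange).injective
  have : Small.{v} (Ideal.span {π}) := by
    have hkerπ : ker (toSpanSingleton R R π) = Ideal.span {π} := by
      ext r; simp [mul_comm r, hann]
    rw [Ideal.span, span_singleton_eq_range]
    exact small_of_injective (hkerπ ▸ (toSpanSingleton R R π).quotKerEquivRange).symm.injective
  have : Small.{v} (R ⧸ (Ideal.span {π}).toAddSubgroup) := ‹Small.{v} (R ⧸ Ideal.span {π})›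
  have : Small.{v} (Ideal.span {π}).toAddSubgroup := ‹Small.{v} (Ideal.span {π})›
  exact small_map
    (AddSubgroup.addGroupEquivQuotientProdAddSubgroup (s := (Ideal.span {π}).toAddSubgroup))

theorem exists_finsupp_surjective_ker_eq (hann : ∀ x, π * x = 0 ↔ x ∈ Ideal.span {π})
    (hmax : (Ideal.span {π}).IsMaximal) (W : Type v) [AddCommGroup W] [Module R W]
    (hW : ∀ w : W, π • w = 0) :
    ∃ (ι : Type v) (χ : (ι →₀ R) →ₗ[R] W),
      Function.Surjective χ ∧ ker χ = ker (lsmul R (ι →₀ R) π) := by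
  let _ := ((Module.isTorsionBySet_span_singleton_iff π).mpr hW).module
  let _ := Ideal.Quotient.field (Ideal.span {π})
  let b := Module.Basis.ofVectorSpace (R ⧸ Ideal.span {π}) W
  refine ⟨_, b.repr.symm.toLinearMap.restrictScalars R ∘ₗ
    Finsupp.mapRange.linearMap (Ideal.Quotient.mkₐ R _).toLinearMap,
    b.repr.symm.surjective.comp (Finsupp.mapRange_surjective _ (map_zero _)
      Ideal.Quotient.mk_surjective), ?_⟩
  ext z
  simp only [mem_ker, comp_apply, restrictScalars_apply, LinearEquiv.coe_coe,
    LinearEquiv.map_eq_zero_iff, lsmul_apply, Finsupp.smul_eq_zero_iff_forall_mem hann,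
    Finsupp.ext_iff]
  simp [Ideal.Quotient.eq_zero_iff_mem]

theorem exists_finsupp_injective_sup_ker_eq_top
    (hann : ∀ x, π * x = 0 ↔ x ∈ Ideal.span {π})
    (hmax : (Ideal.span {π}).IsMaximal) (M : Type v) [AddCommGroup M] [Module R M] :
    ∃ (ι : Type v) (α : (ι →₀ R) →ₗ[R] M), Function.Injective α ∧
      range α ⊓ ker (lsmul R M π) = range (lsmul R M π) ∧ range α ⊔ ker (lsmul R M π) = ⊤ := by
  have hsq := mul_self_eq_zero_of_ann_eq_span hann
  let μ := lsmul R M π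
  obtain ⟨ι, ψ, hψ, hψker⟩ := exists_finsupp_surjective_ker_eq hann hmax (range μ) <| by
    rintro ⟨_, m, rfl⟩
    ext
    simp [μ, smul_smul, hsq]
  obtain ⟨α, hα⟩ := Module.projective_lifting_property μ.rangeRestrict ψ μ.surjective_rangeRestrict
  have hαψ (x : ι →₀ R) : π • α x = ψ x := congrArg (fun g => (g x : M)) hα
  have hαπ {x : ι →₀ R} : π • α x = 0 ↔ ∃ y, x = π • y := by
    rw [hαψ, ZeroMemClass.coe_eq_zero, ← mem_ker, hψker, ← range_lsmul_eq_ker hann]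
    exact ⟨fun ⟨y, hy⟩ => ⟨y, hy.symm⟩, fun ⟨y, hy⟩ => ⟨y, hy.symm⟩⟩
  have hψα (m : M) : ∃ x, π • α x = π • m := by
    obtain ⟨x, hx⟩ := hψ ⟨π • m, m, rfl⟩
    exact ⟨x, by rw [hαψ, hx]⟩
  refine ⟨ι, α, (injective_iff_map_eq_zero α).mpr fun x hx => ?_,
    le_antisymm (fun m hm => ?_) (fun m hm => ?_), eq_top_iff.mpr fun m _ => ?_⟩
  · obtain ⟨y, rfl⟩ := hαπ.mp (by rw [hx, smul_zero])
    obtain ⟨y', rfl⟩ := hαπ.mp (by rwa [← map_smul])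
    rw [smul_smul, hsq, zero_smul]
  · obtain ⟨⟨x, rfl⟩, hx⟩ := hm
    obtain ⟨y, rfl⟩ := hαπ.mp hx
    exact ⟨α y, (map_smul α π y).symm⟩
  · obtain ⟨m', rfl⟩ := hm
    obtain ⟨x, hx⟩ := hψα m'
    refine ⟨⟨π • x, by rw [map_smul, hx]; rfl⟩, ?_⟩
    simp [smul_smul, hsq]
  · obtain ⟨x, hx⟩ := hψα m
    refine Submodule.mem_sup.mpr ⟨α x, ⟨x, rfl⟩, m - α x, ?_, add_sub_cancel _ _⟩
    simp [smul_sub, hx]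

theorem exists_finsupp_prod_surjective (hann : ∀ x, π * x = 0 ↔ x ∈ Ideal.span {π})
    (hmax : (Ideal.span {π}).IsMaximal) (M : Type v) [AddCommGroup M] [Module R M] :
    ∃ (ι₁ ι₂ : Type v) (φ : (ι₁ →₀ R) × (ι₂ →₀ R) →ₗ[R] M), Function.Surjective φ ∧
      ∀ x z, φ (x, z) = 0 ↔ x = 0 ∧ π • z = 0 := by
  let μ := lsmul R M π
  obtain ⟨ι₁, α, hα, hinf, hsup⟩ := exists_finsupp_injective_sup_ker_eq_top hann hmax M
  let K := (range μ).comap (ker μ).subtype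
  obtain ⟨ι₂, χ, hχ, hχker⟩ := exists_finsupp_surjective_ker_eq hann hmax (ker μ ⧸ K) <| by
    intro w
    obtain ⟨n, rfl⟩ := K.mkQ_surjective w
    rw [← map_smul, Submodule.mkQ_apply, Submodule.Quotient.mk_eq_zero]
    exact ⟨n, rfl⟩
  obtain ⟨β, hβ⟩ := Module.projective_lifting_property K.mkQ χ (Submodule.mkQ_surjective _)
  have hβq (z : ι₂ →₀ R) : K.mkQ (β z) = χ z := congrArg (· z) hβ
  have hβ0 {z : ι₂ →₀ R} (hz : π • z = 0) : β z = 0 := by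
    obtain ⟨z', rfl⟩ := (range_lsmul_eq_ker hann).ge hz
    rw [lsmul_apply, map_smul]
    exact Subtype.ext (β z').2
  refine ⟨ι₁, ι₂, α.coprod ((ker μ).subtype ∘ₗ β), fun m => ?_, fun x z => ?_⟩
  · obtain ⟨_, ⟨x, rfl⟩, n, hn, rfl⟩ := Submodule.mem_sup.mp (hsup ▸ Submodule.mem_top (x := m))
    obtain ⟨z, hz⟩ := hχ (K.mkQ ⟨n, hn⟩)
    obtain ⟨x', hx'⟩ : (n - β z : M) ∈ range α := by
      refine (hinf.ge.trans inf_le_left) ?_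
      exact (Submodule.Quotient.eq K).mp (hz.symm.trans (hβq z).symm)
    refine ⟨(x + x', z), ?_⟩
    simp [hx', add_assoc]
  · simp only [coprod_apply, comp_apply, Submodule.subtype_apply]
    refine ⟨fun h => ?_, fun ⟨hx, hz⟩ => by simp [hx, hβ0 hz]⟩
    have hβK : β z ∈ K := by
      change (β z : M) ∈ range μ
      rw [← hinf]
      refine ⟨⟨-x, ?_⟩, (β z).2⟩
      rw [map_neg, neg_eq_iff_add_eq_zero, h]
    have hz : π • z = 0 := by
      rw [← lsmul_apply, ← mem_ker, ← hχker, mem_ker, ← hβq, Submodule.mkQ_apply,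
        Submodule.Quotient.mk_eq_zero]
      exact hβK
    rw [hβ0 hz, ZeroMemClass.coe_zero, add_zero, ← map_zero α] at h
    exact ⟨hα h, hz⟩

theorem isStronglyGorensteinProjective_of_ann_eq_span
    (hann : ∀ x, π * x = 0 ↔ x ∈ Ideal.span {π}) (hmax : (Ideal.span {π}).IsMaximal)
    (M : ModuleCat.{v} R) : IsStronglyGorensteinProjective R M := by
  have hbaer (Q : ModuleCat.{v} R) (_ : Module.Projective R Q) : Module.Baer R Q :=
    baer_of_projective hann hmax Q
  -- The free module built below lies in `Type v` only if `R` is `v`-small, which needs `M ≠ 0`.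
  cases subsingleton_or_nontrivial M with
  | inl _ =>
    exact isStronglyGorensteinProjective_of_ker_eq hbaer (P := M) 0 (Subsingleton.elim _ _) 0
      (fun m => ⟨0, Subsingleton.elim _ _⟩) rfl
  | inr _ =>
    have := small_of_nontrivial hann hmax M
    obtain ⟨ι₁, ι₂, φ, hφ, hφ0⟩ := exists_finsupp_prod_surjective hann hmax M
    refine isStronglyGorensteinProjective_of_ker_eq hbaer
      (prodMap (inl R _ _ ∘ₗ snd R _ _) (lsmul R (ι₂ →₀ R) π)) ?_
      (φ ∘ₗ prodMap (snd R (ι₁ →₀ R) (ι₁ →₀ R)) id) (fun m => ?_) ?_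
    · rw [range_prodMap, ker_prodMap, range_lsmul_eq_ker hann,
        range_comp_of_range_eq_top _ Submodule.range_snd,
        ker_comp_of_ker_eq_bot _ Submodule.ker_inl, ker_snd]
    · obtain ⟨⟨y, z⟩, rfl⟩ := hφ m
      exact ⟨((0, y), z), rfl⟩
    · ext ⟨⟨x, y⟩, z⟩
      simp [hφ0]

end AnnihilatorEqSpan

theorem Ideal.Quotient.mk_mul_eq_zero_iff_mem_span {D : Type u} [CommRing D] [IsDomain D]
    {p : D} (hp : p ≠ 0) (x : D ⧸ Ideal.span {p} ^ 2) :
    Ideal.Quotient.mk _ p * x = 0 ↔ x ∈ Ideal.span {Ideal.Quotient.mk _ p} := by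
  obtain ⟨a, rfl⟩ := Ideal.Quotient.mk_surjective x
  rw [← Set.image_singleton, ← Ideal.map_span,
    Ideal.mem_quotient_iff_mem (Ideal.pow_le_self two_ne_zero), ← map_mul,
    Ideal.Quotient.eq_zero_iff_mem, Ideal.span_singleton_pow, Ideal.mem_span_singleton,
    Ideal.mem_span_singleton, pow_two, mul_dvd_mul_iff_left hp]

theorem Ideal.IsMaximal.span_mk_quotient_sq {D : Type u} [CommRing D] {p : D}
    (hmax : (Ideal.span {p}).IsMaximal) :
    (Ideal.span {Ideal.Quotient.mk (Ideal.span {p} ^ 2) p}).IsMaximal := by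
  rw [← Set.image_singleton, ← Ideal.map_span]
  exact Ideal.IsMaximal.map_of_surjective_of_ker_le Ideal.Quotient.mk_surjective
    (by rw [Ideal.mk_ker]; exact Ideal.pow_le_self two_ne_zero)

/-- Example 2.2(1): over `D/P²`, `D` a PID and `P` a nonzero prime ideal, every Gorenstein
projective module is strongly Gorenstein projective. -/
theorem gorensteinProjective_eq_strongly_over_quotient_sq
    (D : Type u) [CommRing D] [IsDomain D] [IsPrincipalIdealRing D]
    (P : Ideal D) (hP : P.IsPrime) (hP0 : P ≠ ⊥) :
    ∀ M : ModuleCat.{v} (D ⧸ P ^ 2),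
      IsGorensteinProjective (D ⧸ P ^ 2) M →
        IsStronglyGorensteinProjective (D ⧸ P ^ 2) M := by
  intro M _
  obtain ⟨p, rfl⟩ : ∃ p, P = Ideal.span {p} :=
    ⟨_, (Submodule.IsPrincipal.span_singleton_generator P).symm⟩
  have hp : p ≠ 0 := by rintro rfl; simp at hP0
  exact isStronglyGorensteinProjective_of_ann_eq_span
    (Ideal.Quotient.mk_mul_eq_zero_iff_mem_span hp) (hP.isMaximal hP0).span_mk_quotient_sq M
end

section
/- Let R₁, …, R_m be a finite family of commutative rings, each with finite Gorenstein global dimension. Then every Gorenstein projective module over the product ring R₁ × ⋯ × R_m is strongly Gorenstein projective if, and only if, for each i = 1, …, m every Gorenstein projective R_i-module is strongly Gorenstein projective. -/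
universe u v

/-! Write `S = ∀ i, R i` and `e i = Pi.single i 1`. An `S`-module `N` splits as `∀ i, e i • N`
with `e i • N` an `R i`-module, and an `R i`-module is an `S`-module through the projection.
Both constructions are exact, preserve projectivity, and identify `Hom_S(N, Q)` with
`Hom_{R i}(e i • N, Q)` and `Hom_S(Q, N)` with `Hom_{R i}(Q, e i • N)` for `R i`-modules `Q`.
So they preserve complete resolutions by projectives that stay exact under `Hom(-, projective)`,
in particular the one-map resolutions `⋯ → P → P → ⋯` of strongly Gorenstein projective modules.
A Gorenstein projective `R i`-module `M` is therefore Gorenstein projective over `S`; if that makes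
it strongly so, its `i`-th component, which is `M`, is strongly Gorenstein projective over `R i`.
Conversely, the components of a Gorenstein projective `S`-module are Gorenstein projective, and
if they are strongly so, the product of their one-map resolutions is one for the module. -/

open Function

universe t w

theorem Module.Projective.of_isScalarTower_of_surjective {A B X : Type*} [CommSemiring A]
    [Semiring B] [Algebra A B] [AddCommMonoid X] [Module A X] [Module B X] [IsScalarTower A B X]
    (hAB : Surjective (algebraMap A B)) [Module.Projective A X] : Module.Projective B X :=
  .of_lifting_property'' fun f hf ↦
    let ⟨h, hh⟩ := Module.projective_lifting_property (f.restrictScalars A) .id hf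
    ⟨h.extendScalarsOfSurjective hAB, LinearMap.ext fun x ↦ LinearMap.congr_fun hh x⟩

theorem nonempty_linearEquiv_range_iff {A M P P' : Type*} [Ring A] [AddCommGroup M]
    [AddCommGroup P] [AddCommGroup P'] [Module A M] [Module A P] [Module A P']
    {f : P →ₗ[A] P'} :
    Nonempty (M ≃ₗ[A] LinearMap.range f) ↔
      ∃ g : M →ₗ[A] P', Injective g ∧ LinearMap.range g = LinearMap.range f :=
  ⟨fun ⟨e⟩ ↦ ⟨(LinearMap.range f).subtype ∘ₗ e.toLinearMap,
      Subtype.val_injective.comp e.injective, by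
        rw [LinearMap.range_comp, LinearEquiv.range, Submodule.map_top, Submodule.range_subtype]⟩,
    fun ⟨g, hg, h⟩ ↦ ⟨(LinearEquiv.ofInjective g hg).trans (LinearEquiv.ofEq _ _ h)⟩⟩

def HomProjExact {A X Y Z : Type*} [Ring A] [AddCommGroup X] [AddCommGroup Y] [AddCommGroup Z]
    [Module A X] [Module A Y] [Module A Z] (f : X →ₗ[A] Y) (g : Y →ₗ[A] Z) : Prop :=
  ∀ Q : ModuleCat.{w} A, Module.Projective A Q →
    ∀ φ : Y →ₗ[A] Q, φ ∘ₗ f = 0 → ∃ ψ : Z →ₗ[A] Q, ψ ∘ₗ g = φ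

theorem IsStronglyGorensteinProjective.of_linearEquiv {A : Type u} [CommRing A]
    {M N : ModuleCat.{v} A} (e : M ≃ₗ[A] N) (h : IsStronglyGorensteinProjective A N) :
    IsStronglyGorensteinProjective A M :=
  let ⟨P, f, hP, hf, ⟨e'⟩, hHom⟩ := h
  ⟨P, f, hP, hf, ⟨e.trans e'⟩, hHom⟩

namespace PiRing

variable {ι : Type t} {R : ι → Type*} [∀ i, CommRing (R i)]

/-- An `R i`-module `X` carrying `IsScalarTower (∀ j, R j) (R i) X` is one on which the product
acts through the projection to `R i`. -/
abbrev evalAlgebra (i : ι) : Algebra (∀ j, R j) (R i) := (Pi.evalRingHom R i).toAlgebra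

attribute [local instance] evalAlgebra

lemma smul_eq_eval_smul (i : ι) {X : Type*} [AddCommGroup X] [Module (R i) X]
    [Module (∀ j, R j) X] [IsScalarTower (∀ j, R j) (R i) X] (s : ∀ j, R j) (x : X) :
    s • x = s i • x :=
  (algebraMap_smul (R i) s x).symm

section RestrictScalars

variable {i : ι} {X Y Z : Type*} [AddCommGroup X] [Module (R i) X] [Module (∀ j, R j) X]
  [IsScalarTower (∀ j, R j) (R i) X] [AddCommGroup Y] [Module (R i) Y] [Module (∀ j, R j) Y]
  [IsScalarTower (∀ j, R j) (R i) Y] [AddCommGroup Z] [Module (R i) Z] [Module (∀ j, R j) Z]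
  [IsScalarTower (∀ j, R j) (R i) Z]

lemma nonempty_equiv_range_restrictScalars {f : Y →ₗ[R i] Z}
    (h : Nonempty (X ≃ₗ[R i] LinearMap.range f)) :
    Nonempty (X ≃ₗ[∀ j, R j] LinearMap.range (f.restrictScalars (∀ j, R j))) := by
  obtain ⟨g, hg, hgf⟩ := nonempty_linearEquiv_range_iff.1 h
  refine nonempty_linearEquiv_range_iff.2 ⟨g.restrictScalars _, hg, ?_⟩
  rw [LinearMap.range_restrictScalars, LinearMap.range_restrictScalars, hgf]

end RestrictScalars

section PiMap

variable {X Y Z : ι → Type*} [∀ j, AddCommGroup (X j)] [∀ j, Module (R j) (X j)]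
  [∀ j, AddCommGroup (Y j)] [∀ j, Module (R j) (Y j)]
  [∀ j, AddCommGroup (Z j)] [∀ j, Module (R j) (Z j)]

def piMap (f : ∀ j, X j →ₗ[R j] Y j) : (∀ j, X j) →ₗ[∀ j, R j] ∀ j, Y j where
  toFun := Pi.map fun j ↦ f j
  map_add' x y := funext fun j ↦ map_add (f j) (x j) (y j)
  map_smul' s x := funext fun j ↦ map_smul (f j) (s j) (x j)

lemma coe_range_piMap (f : ∀ j, X j →ₗ[R j] Y j) :
    (LinearMap.range (piMap f) : Set (∀ j, Y j)) = Set.univ.pi fun j ↦ LinearMap.range (f j) :=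
  Set.range_piMap _

lemma range_piMap_eq_ker {f : ∀ j, X j →ₗ[R j] Y j} {g : ∀ j, Y j →ₗ[R j] Z j}
    (h : ∀ j, LinearMap.range (f j) = LinearMap.ker (g j)) :
    LinearMap.range (piMap f) = LinearMap.ker (piMap g) := by
  ext y
  rw [← SetLike.mem_coe, coe_range_piMap, Set.mem_univ_pi, LinearMap.mem_ker, funext_iff]
  exact forall_congr' fun j ↦ by rw [SetLike.mem_coe, h j, LinearMap.mem_ker]; rfl

end PiMap

variable [DecidableEq ι]

lemma algebraMap_eval_surjective (i : ι) : Surjective (algebraMap (∀ j, R j) (R i)) :=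
  fun r ↦ ⟨Pi.single i r, Pi.single_eq_same i r⟩

section Component

variable (R) (i : ι) (N : Type*) [AddCommGroup N] [Module (∀ j, R j) N]

def component : Submodule (∀ j, R j) N where
  carrier := {x | (Pi.single i 1 : ∀ j, R j) • x = x}
  add_mem' {a b} ha hb := by
    simp only [Set.mem_ofPred_eq, smul_add] at *
    rw [ha, hb]
  zero_mem' := smul_zero _
  smul_mem' s x hx := by
    simp only [Set.mem_ofPred_eq] at *
    rw [smul_comm, hx]

variable {R i N}

lemma mem_component_iff {x : N} : x ∈ component R i N ↔ (Pi.single i 1 : ∀ j, R j) • x = x :=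
  Iff.rfl

lemma single_smul_mem_component (r : R i) (x : N) :
    (Pi.single i r : ∀ j, R j) • x ∈ component R i N := by
  rw [mem_component_iff, smul_smul, ← Pi.single_mul, one_mul]

instance : SMul (R i) (component R i N) :=
  ⟨fun r x ↦ ⟨(Pi.single i r : ∀ j, R j) • (x : N), single_smul_mem_component r (x : N)⟩⟩

@[simp] lemma coe_component_smul (r : R i) (x : component R i N) :
    ((r • x : component R i N) : N) = (Pi.single i r : ∀ j, R j) • (x : N) := rfl

instance : Module (R i) (component R i N) where
  one_smul x := Subtype.ext x.2
  mul_smul r r' x := Subtype.ext <| by simp [Pi.single_mul, mul_smul]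
  smul_zero r := Subtype.ext <| smul_zero _
  smul_add r x y := Subtype.ext <| smul_add _ (x : N) y
  add_smul r r' x := Subtype.ext <| by simp [Pi.single_add, add_smul]
  zero_smul x := Subtype.ext <| by simp

instance : IsScalarTower (∀ j, R j) (R i) (component R i N) :=
  .of_algebraMap_smul fun s x ↦ Subtype.ext <| by
    change (Pi.single i (s i) : ∀ j, R j) • (x : N) = s • (x : N)
    conv_rhs => rw [← x.2, smul_smul, ← Pi.single_mul_right, mul_one]

variable (R i) in
def componentProj : N →ₗ[∀ j, R j] component R i N :=
  (LinearMap.lsmul (∀ j, R j) N (Pi.single i 1)).codRestrict _ (single_smul_mem_component 1)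

@[simp] lemma coe_componentProj (x : N) :
    (componentProj R i x : N) = (Pi.single i 1 : ∀ j, R j) • x := rfl

@[simp] lemma componentProj_coe (x : component R i N) : componentProj R i (x : N) = x :=
  Subtype.ext x.2

variable {N' : Type*} [AddCommGroup N'] [Module (∀ j, R j) N']

variable (i) in
def componentMap (f : N →ₗ[∀ j, R j] N') : component R i N →ₗ[R i] component R i N' :=
  (f.restrict fun x hx ↦ by rw [mem_component_iff, ← map_smul, hx]).extendScalarsOfSurjective
    (algebraMap_eval_surjective i)

@[simp] lemma coe_componentMap (f : N →ₗ[∀ j, R j] N') (x : component R i N) :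
    (componentMap i f x : N') = f x := rfl

lemma componentMap_componentProj (f : N →ₗ[∀ j, R j] N') (x : N) :
    componentMap i f (componentProj R i x) = componentProj R i (f x) :=
  Subtype.ext (map_smul f _ x)

lemma mem_range_componentMap {f : N →ₗ[∀ j, R j] N'} {y : component R i N'} :
    y ∈ LinearMap.range (componentMap i f) ↔ (y : N') ∈ LinearMap.range f := by
  refine ⟨fun ⟨x, hx⟩ ↦ ⟨x, congrArg Subtype.val hx⟩, fun ⟨x, hx⟩ ↦ ⟨componentProj R i x, ?_⟩⟩
  rw [componentMap_componentProj, hx, componentProj_coe]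

lemma mem_ker_componentMap {f : N →ₗ[∀ j, R j] N'} {x : component R i N} :
    x ∈ LinearMap.ker (componentMap i f) ↔ (x : N) ∈ LinearMap.ker f := by
  simp only [LinearMap.mem_ker, ← Submodule.coe_eq_zero, coe_componentMap]

lemma range_componentMap_eq_ker {N'' : Type*} [AddCommGroup N''] [Module (∀ j, R j) N'']
    {f : N →ₗ[∀ j, R j] N'} {g : N' →ₗ[∀ j, R j] N''}
    (h : LinearMap.range f = LinearMap.ker g) :
    LinearMap.range (componentMap i f) = LinearMap.ker (componentMap i g) := by
  ext y
  rw [mem_range_componentMap, mem_ker_componentMap, h]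

lemma componentMap_injective {f : N →ₗ[∀ j, R j] N'} (hf : Injective f) :
    Injective (componentMap i f) :=
  fun _ _ h ↦ Subtype.ext (hf (congrArg Subtype.val h))

lemma componentMap_surjective {f : N →ₗ[∀ j, R j] N'} (hf : Surjective f) :
    Surjective (componentMap i f) :=
  fun y ↦ mem_range_componentMap.2 (hf y)

instance [Module.Projective (∀ j, R j) N] : Module.Projective (R i) (component R i N) :=
  have : Module.Projective (∀ j, R j) (component R i N) :=
    .of_split (component R i N).subtype (componentProj R i) (LinearMap.ext componentProj_coe)
  .of_isScalarTower_of_surjective (algebraMap_eval_surjective i)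

end Component

section IsScalarTower

variable {i : ι} {N X Q : Type*} [AddCommGroup N] [Module (∀ j, R j) N] [AddCommGroup X]
  [Module (R i) X] [Module (∀ j, R j) X] [IsScalarTower (∀ j, R j) (R i) X] [AddCommGroup Q]
  [Module (∀ j, R j) Q]

variable (R i) in
lemma mem_component_of_isScalarTower (x : X) : x ∈ component R i X := by
  rw [mem_component_iff, smul_eq_eval_smul i, Pi.single_eq_same, one_smul]

variable (R i X) in
def componentEquivOfIsScalarTower : component R i X ≃ₗ[R i] X :=
  (LinearEquiv.ofTop _ (eq_top_iff.2 fun x _ ↦ mem_component_of_isScalarTower R i x)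
    ).extendScalarsOfSurjective (algebraMap_eval_surjective i)

variable (R i X Q) in
def linearMapComponentEquiv : (X →ₗ[∀ j, R j] Q) ≃+ (X →ₗ[R i] component R i Q) where
  toFun φ := (φ.codRestrict _ fun x ↦ by
      rw [mem_component_iff, ← map_smul, (mem_component_of_isScalarTower R i x : _ = x)]
    ).extendScalarsOfSurjective (algebraMap_eval_surjective i)
  invFun ψ := (component R i Q).subtype ∘ₗ ψ.restrictScalars (∀ j, R j)
  left_inv _ := rfl
  right_inv _ := rfl
  map_add' _ _ := rfl

lemma linearMapComponentEquiv_comp_restrictScalars {Y : Type*} [AddCommGroup Y]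
    [Module (R i) Y] [Module (∀ j, R j) Y] [IsScalarTower (∀ j, R j) (R i) Y]
    (φ : Y →ₗ[∀ j, R j] Q) (a : X →ₗ[R i] Y) :
    linearMapComponentEquiv R i X Q (φ ∘ₗ a.restrictScalars (∀ j, R j)) =
      linearMapComponentEquiv R i Y Q φ ∘ₗ a :=
  rfl

lemma linearMapComponentEquiv_comp {Q' : Type*} [AddCommGroup Q'] [Module (∀ j, R j) Q']
    (g : Q →ₗ[∀ j, R j] Q') (φ : X →ₗ[∀ j, R j] Q) :
    linearMapComponentEquiv R i X Q' (g ∘ₗ φ) =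
      componentMap i g ∘ₗ linearMapComponentEquiv R i X Q φ :=
  rfl

variable (R i X) in
theorem projective_of_isScalarTower [hX : Module.Projective (R i) X] :
    Module.Projective (∀ j, R j) X :=
  .of_lifting_property'' fun f hf ↦ by
    obtain ⟨ψ, hψ⟩ := Module.projective_lifting_property (componentMap i f)
      (linearMapComponentEquiv R i X X .id) (componentMap_surjective hf)
    refine ⟨(linearMapComponentEquiv R i X _).symm ψ,
      (linearMapComponentEquiv R i X X).injective ?_⟩
    rw [linearMapComponentEquiv_comp, AddEquiv.apply_symm_apply, hψ]

variable (R i N X) in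
def componentLinearMapEquiv : (N →ₗ[∀ j, R j] X) ≃+ (component R i N →ₗ[R i] X) where
  toFun φ := (φ ∘ₗ (component R i N).subtype).extendScalarsOfSurjective
    (algebraMap_eval_surjective i)
  invFun ψ := ψ.restrictScalars (∀ j, R j) ∘ₗ componentProj R i
  left_inv φ := LinearMap.ext fun x ↦ by
    change φ ((Pi.single i 1 : ∀ j, R j) • x) = φ x
    rw [map_smul, mem_component_of_isScalarTower R i (φ x)]
  right_inv ψ := LinearMap.ext fun x ↦ congrArg ψ (componentProj_coe x)
  map_add' _ _ := rfl

lemma componentLinearMapEquiv_comp {N' : Type*} [AddCommGroup N'] [Module (∀ j, R j) N']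
    (φ : N' →ₗ[∀ j, R j] X) (f : N →ₗ[∀ j, R j] N') :
    componentLinearMapEquiv R i N X (φ ∘ₗ f) =
      componentLinearMapEquiv R i N' X φ ∘ₗ componentMap i f :=
  rfl

theorem HomProjExact.restrictScalars {Y Z : Type*} [AddCommGroup Y] [Module (R i) Y]
    [Module (∀ j, R j) Y] [IsScalarTower (∀ j, R j) (R i) Y] [AddCommGroup Z] [Module (R i) Z]
    [Module (∀ j, R j) Z] [IsScalarTower (∀ j, R j) (R i) Z] {f : X →ₗ[R i] Y} {g : Y →ₗ[R i] Z}
    (h : HomProjExact.{w} f g) :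
    HomProjExact.{w} (f.restrictScalars (∀ j, R j)) (g.restrictScalars (∀ j, R j)) := by
  intro Q hQ φ hφ
  obtain ⟨ψ, hψ⟩ := h (.of (R i) (component R i Q)) inferInstance
    (linearMapComponentEquiv R i Y Q φ)
    (by rw [← linearMapComponentEquiv_comp_restrictScalars, hφ, map_zero])
  refine ⟨(linearMapComponentEquiv R i Z Q).symm ψ, (linearMapComponentEquiv R i Y Q).injective ?_⟩
  rw [linearMapComponentEquiv_comp_restrictScalars, AddEquiv.apply_symm_apply, hψ]

end IsScalarTower

section ComponentTransfer

variable {i : ι} {X Y Z : Type*} [AddCommGroup X] [Module (∀ j, R j) X] [AddCommGroup Y]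
  [Module (∀ j, R j) Y] [AddCommGroup Z] [Module (∀ j, R j) Z]

lemma nonempty_component_equiv_range {f : Y →ₗ[∀ j, R j] Z}
    (h : Nonempty (X ≃ₗ[∀ j, R j] LinearMap.range f)) :
    Nonempty (component R i X ≃ₗ[R i] LinearMap.range (componentMap i f)) := by
  obtain ⟨g, hg, hgf⟩ := nonempty_linearEquiv_range_iff.1 h
  refine nonempty_linearEquiv_range_iff.2 ⟨componentMap i g, componentMap_injective hg, ?_⟩
  ext y
  rw [mem_range_componentMap, mem_range_componentMap, hgf]

theorem HomProjExact.componentMap {f : X →ₗ[∀ j, R j] Y} {g : Y →ₗ[∀ j, R j] Z}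
    (h : HomProjExact.{w} f g) : HomProjExact.{w} (componentMap i f) (componentMap i g) := by
  intro Q hQ φ hφ
  let : Module (∀ j, R j) Q := Module.compHom Q (Pi.evalRingHom R i)
  have : IsScalarTower (∀ j, R j) (R i) Q := .of_compHom _ _ _
  obtain ⟨ψ, hψ⟩ := h (.of _ Q) (projective_of_isScalarTower R i Q)
    ((componentLinearMapEquiv R i Y Q).symm φ) <|
    (componentLinearMapEquiv R i X Q).injective <| by
      rw [componentLinearMapEquiv_comp, AddEquiv.apply_symm_apply, hφ, map_zero]
  refine ⟨componentLinearMapEquiv R i Z Q ψ, ?_⟩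
  rw [← componentLinearMapEquiv_comp, hψ, AddEquiv.apply_symm_apply]

end ComponentTransfer

section Pi

variable [Fintype ι] {X Y Z : ι → Type*} [∀ j, AddCommGroup (X j)] [∀ j, Module (R j) (X j)]
  [∀ j, AddCommGroup (Y j)] [∀ j, Module (R j) (Y j)]
  [∀ j, AddCommGroup (Z j)] [∀ j, Module (R j) (Z j)]
  {N Q : Type*} [AddCommGroup N] [Module (∀ j, R j) N] [AddCommGroup Q] [Module (∀ j, R j) Q]

variable (X Q) in
def piLinearMapEquiv : ((∀ j, X j) →ₗ[∀ j, R j] Q) ≃+ ∀ j, X j →ₗ[R j] component R j Q where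
  toFun φ j :=
    { toFun y := ⟨φ (Pi.single j y), by
        rw [mem_component_iff, ← map_smul, ← Pi.single_smul₀, one_smul]⟩
      map_add' y y' := Subtype.ext <| by simp only [Pi.single_add, map_add, Submodule.coe_add]
      map_smul' r y := Subtype.ext <| by
        simp only [Pi.single_smul₀, map_smul, coe_component_smul, RingHom.id_apply] }
  invFun ψ :=
    { toFun z := ∑ j, (ψ j (z j) : Q)
      map_add' z z' := by
        simp only [Pi.add_apply, map_add, Submodule.coe_add, Finset.sum_add_distrib]
      map_smul' s z := by
        simp only [Pi.smul_apply', map_smul, RingHom.id_apply, Finset.smul_sum,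
          ← Submodule.coe_smul]
        exact Finset.sum_congr rfl fun j _ ↦ by rw [smul_eq_eval_smul j s (ψ j (z j))] }
  left_inv φ := LinearMap.ext fun z ↦ by
    simp only [LinearMap.coe_mk, AddHom.coe_mk, ← map_sum, Finset.univ_sum_single]
  right_inv ψ := funext fun j ↦ LinearMap.ext fun y ↦ Subtype.ext <| by
    simp only [LinearMap.coe_mk, AddHom.coe_mk]
    rw [Finset.sum_eq_single j (fun k _ hk ↦ by rw [Pi.single_eq_of_ne hk, map_zero,
      Submodule.coe_zero]) (by simp), Pi.single_eq_same]
  map_add' _ _ := rfl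

lemma piLinearMapEquiv_comp_piMap (φ : (∀ j, Y j) →ₗ[∀ j, R j] Q) (f : ∀ j, X j →ₗ[R j] Y j)
    (j : ι) : piLinearMapEquiv X Q (φ ∘ₗ piMap f) j = piLinearMapEquiv Y Q φ j ∘ₗ f j :=
  LinearMap.ext fun y ↦ Subtype.ext <| show φ _ = φ _ from congrArg φ <| funext <|
    Pi.apply_single (fun k ↦ f k) (fun k ↦ map_zero (f k)) j y

lemma piLinearMapEquiv_comp {Q' : Type*} [AddCommGroup Q'] [Module (∀ j, R j) Q']
    (g : Q →ₗ[∀ j, R j] Q') (φ : (∀ j, X j) →ₗ[∀ j, R j] Q) (j : ι) :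
    piLinearMapEquiv X Q' (g ∘ₗ φ) j = componentMap j g ∘ₗ piLinearMapEquiv X Q φ j :=
  LinearMap.ext fun _ ↦ rfl

instance [∀ j, Module.Projective (R j) (X j)] : Module.Projective (∀ j, R j) (∀ j, X j) :=
  .of_lifting_property'' fun f hf ↦ by
    choose ψ hψ using fun j ↦ Module.projective_lifting_property (componentMap j f)
      (piLinearMapEquiv X _ .id j) (componentMap_surjective hf)
    refine ⟨(piLinearMapEquiv X _).symm ψ, (piLinearMapEquiv X _).injective (funext fun j ↦ ?_)⟩
    rw [piLinearMapEquiv_comp, AddEquiv.apply_symm_apply, hψ]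

variable (R N) in
def piComponentEquiv : N ≃ₗ[∀ j, R j] ∀ j, component R j N where
  toFun x j := componentProj R j x
  invFun y := ∑ j, (y j : N)
  map_add' x y := funext fun j ↦ map_add _ x y
  map_smul' s x := funext fun j ↦ by
    rw [map_smul]; exact smul_eq_eval_smul j s (componentProj R j x)
  left_inv x := by
    simp only [coe_componentProj, ← Finset.sum_smul,
      (CompleteOrthogonalIdempotents.single R).complete, one_smul]
  right_inv y := funext fun j ↦ Subtype.ext <| by
    rw [coe_componentProj, Finset.smul_sum, Finset.sum_eq_single j, (y j).2]
    · intro k _ hk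
      rw [← (y k).2, smul_smul, (CompleteOrthogonalIdempotents.single R).ortho hk.symm, zero_smul]
    · simp

lemma nonempty_equiv_range_piMap {f : ∀ j, Y j →ₗ[R j] Z j}
    (h : ∀ j, Nonempty (component R j N ≃ₗ[R j] LinearMap.range (f j))) :
    Nonempty (N ≃ₗ[∀ j, R j] LinearMap.range (piMap f)) := by
  choose g hg hgf using fun j ↦ nonempty_linearEquiv_range_iff.1 (h j)
  refine nonempty_linearEquiv_range_iff.2 ⟨piMap g ∘ₗ (piComponentEquiv R N).toLinearMap,
    (Injective.piMap hg).comp (piComponentEquiv R N).injective, ?_⟩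
  rw [LinearMap.range_comp_of_range_eq_top _ (LinearEquiv.range _)]
  refine SetLike.coe_injective ?_
  simp only [coe_range_piMap, hgf]

theorem HomProjExact.piMap {f : ∀ j, X j →ₗ[R j] Y j} {g : ∀ j, Y j →ₗ[R j] Z j}
    (h : ∀ j, HomProjExact.{w} (f j) (g j)) : HomProjExact.{w} (piMap f) (piMap g) := by
  intro Q hQ φ hφ
  choose ψ hψ using fun j ↦ h j (.of (R j) (component R j Q)) inferInstance
    (piLinearMapEquiv Y Q φ j) (by rw [← piLinearMapEquiv_comp_piMap, hφ, map_zero]; rfl)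
  refine ⟨(piLinearMapEquiv Z Q).symm ψ, (piLinearMapEquiv Y Q).injective (funext fun j ↦ ?_)⟩
  rw [piLinearMapEquiv_comp_piMap, AddEquiv.apply_symm_apply, hψ]

end Pi

theorem isGorensteinProjective_component {M : ModuleCat.{v} (∀ j, R j)}
    (hM : IsGorensteinProjective (∀ j, R j) M) (i : ι) :
    IsGorensteinProjective (R i) (.of (R i) (component R i M)) := by
  obtain ⟨P, d, hP, hd, hM, hHom⟩ := hM
  exact ⟨fun k ↦ .of (R i) (component R i (P k)), fun k ↦ componentMap i (d k),
    fun k ↦ have := hP k; inferInstance, fun k ↦ range_componentMap_eq_ker (hd k),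
    nonempty_component_equiv_range hM,
    fun Q hQ k ↦ HomProjExact.componentMap (fun Q hQ ↦ hHom Q hQ k) Q hQ⟩

theorem isStronglyGorensteinProjective_component {M : ModuleCat.{v} (∀ j, R j)}
    (hM : IsStronglyGorensteinProjective (∀ j, R j) M) (i : ι) :
    IsStronglyGorensteinProjective (R i) (.of (R i) (component R i M)) := by
  obtain ⟨P, f, hP, hf, hM, hHom⟩ := hM
  exact ⟨.of (R i) (component R i P), componentMap i f, inferInstance,
    range_componentMap_eq_ker hf, nonempty_component_equiv_range hM,
    HomProjExact.componentMap hHom⟩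

theorem isGorensteinProjective_restrictScalars {i : ι} {M : ModuleCat.{v} (R i)}
    (hM : IsGorensteinProjective (R i) M) :
    IsGorensteinProjective (∀ j, R j) ((ModuleCat.restrictScalars (Pi.evalRingHom R i)).obj M) := by
  obtain ⟨P, d, hP, hd, hM, hHom⟩ := hM
  let (X : ModuleCat.{v} (R i)) : Module (∀ j, R j) X := Module.compHom X (Pi.evalRingHom R i)
  have (X : ModuleCat.{v} (R i)) : IsScalarTower (∀ j, R j) (R i) X := .of_compHom _ _ _
  change IsGorensteinProjective _ (.of _ M)
  exact ⟨fun k ↦ .of _ (P k), fun k ↦ (d k).restrictScalars _,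
    fun k ↦ projective_of_isScalarTower R i _ (hX := hP k),
    fun k ↦ by rw [LinearMap.range_restrictScalars, LinearMap.ker_restrictScalars, hd k],
    nonempty_equiv_range_restrictScalars hM,
    fun Q hQ k ↦ HomProjExact.restrictScalars (fun Q hQ ↦ hHom Q hQ k) Q hQ⟩

theorem isStronglyGorensteinProjective_of_restrictScalars {i : ι} {M : ModuleCat.{v} (R i)}
    (hM : IsStronglyGorensteinProjective (∀ j, R j)
      ((ModuleCat.restrictScalars (Pi.evalRingHom R i)).obj M)) :
    IsStronglyGorensteinProjective (R i) M := by
  let : Module (∀ j, R j) M := Module.compHom M (Pi.evalRingHom R i)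
  have : IsScalarTower (∀ j, R j) (R i) M := .of_compHom _ _ _
  exact (isStronglyGorensteinProjective_component hM i).of_linearEquiv
    (componentEquivOfIsScalarTower R i M).symm

theorem isStronglyGorensteinProjective_of_component [Fintype ι]
    {M : ModuleCat.{max t v} (∀ j, R j)}
    (h : ∀ j, IsStronglyGorensteinProjective (R j) (.of (R j) (component R j M))) :
    IsStronglyGorensteinProjective (∀ j, R j) M := by
  choose P f hP hf hM hHom using h
  exact ⟨.of _ (∀ j, P j), piMap f, inferInstance, range_piMap_eq_ker hf,
    nonempty_equiv_range_piMap hM, HomProjExact.piMap hHom⟩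

end PiRing

theorem prod_gorensteinProjective_eq_strongly_iff_general
    (m : ℕ) (R : Fin m → Type u) [∀ i, CommRing (R i)] :
    (∀ M : ModuleCat.{v} (∀ i, R i),
        IsGorensteinProjective (∀ i, R i) M →
          IsStronglyGorensteinProjective (∀ i, R i) M) ↔
    (∀ i, ∀ M : ModuleCat.{v} (R i),
        IsGorensteinProjective (R i) M → IsStronglyGorensteinProjective (R i) M) :=
  ⟨fun H _ _ hM ↦ PiRing.isStronglyGorensteinProjective_of_restrictScalars
      (H _ (PiRing.isGorensteinProjective_restrictScalars hM)),
    fun H _ hM ↦ PiRing.isStronglyGorensteinProjective_of_component fun j ↦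
      H j _ (PiRing.isGorensteinProjective_component hM j)⟩

/-- Theorem 2.3: for a finite family of rings of finite Gorenstein global dimension, every
Gorenstein projective module over the product is strongly Gorenstein projective iff the same
holds over each factor. -/
theorem prod_gorensteinProjective_eq_strongly_iff
    (m : ℕ) (R : Fin m → Type u) [∀ i, CommRing (R i)]
    (hfin : ∀ i, ∃ n : ℕ, ∀ M : ModuleCat.{v} (R i), GorensteinProjDimLE (R i) n M) :
    (∀ M : ModuleCat.{v} (∀ i, R i),
        IsGorensteinProjective (∀ i, R i) M →
          IsStronglyGorensteinProjective (∀ i, R i) M) ↔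
    (∀ i, ∀ M : ModuleCat.{v} (R i),
        IsGorensteinProjective (R i) M → IsStronglyGorensteinProjective (R i) M) :=
  prod_gorensteinProjective_eq_strongly_iff_general m R
end

section
/- Let R₁ and R₂ be commutative rings, each with finite Gorenstein global dimension. If N is a strongly Gorenstein projective R₁-module, then N × 0 is a strongly Gorenstein projective module over the product ring R₁ × R₂. -/
universe u v

/-! Restriction of scalars along `R₁ × R₂ → R₁` preserves projectivity, since `R₁` is a direct
summand of `R₁ × R₂`. For the Hom-exactness condition, a map from an `R₁`-module into an
`R₁ × R₂`-module `Q` lands in the component `Q₁ = (1, 0) • Q`, which is an `R₁`-module and, when `Q`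
is projective, a projective one; so lifts over `R₁` into `Q₁` give lifts over `R₁ × R₂` into `Q`. -/

theorem Module.Projective.trans {R S M : Type*} [CommRing R] [CommRing S] [Algebra R S]
    [AddCommGroup M] [Module R M] [Module S M] [IsScalarTower R S M]
    [Module.Projective R S] [Module.Projective S M] : Module.Projective R M := by
  classical
  obtain ⟨s, hs⟩ := Module.projective_def'.1 ‹Module.Projective S M›
  have : Module.Projective R (M →₀ S) := .of_equiv' (finsuppLequivDFinsupp R).symm
  exact .of_split (s.restrictScalars R) ((Finsupp.linearCombination S id).restrictScalars R)
    (LinearMap.ext fun x => congr($hs x))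

abbrev Prod.algebraFst (R₁ R₂ : Type*) [CommRing R₁] [CommRing R₂] : Algebra (R₁ × R₂) R₁ :=
  (RingHom.fst R₁ R₂).toAlgebra

attribute [local instance] Prod.algebraFst

section

variable {R₁ R₂ : Type*} [CommRing R₁] [CommRing R₂]

theorem Prod.algebraMap_fst_surjective : Function.Surjective (algebraMap (R₁ × R₂) R₁) :=
  Prod.fst_surjective

instance : Module.Projective (R₁ × R₂) R₁ :=
  .of_split (M := R₁ × R₂)
    ⟨⟨fun r => (r, 0), by simp⟩, fun a r => by ext <;> simp [Algebra.smul_def]; rfl⟩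
    (Algebra.linearMap (R₁ × R₂) R₁) (by ext; rfl)

variable (R₁ R₂) in
def fstPart (Q : Type*) [AddCommGroup Q] [Module (R₁ × R₂) Q] : Submodule (R₁ × R₂) Q :=
  Submodule.torsionBy (R₁ × R₂) Q (0, 1)

variable {Q : Type*} [AddCommGroup Q] [Module (R₁ × R₂) Q]

theorem mem_fstPart {q : Q} : q ∈ fstPart R₁ R₂ Q ↔ ((0, 1) : R₁ × R₂) • q = 0 :=
  Submodule.mem_torsionBy_iff _ _

theorem fstPart_smul_eq (c : R₁ × R₂) (x : fstPart R₁ R₂ Q) :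
    ((c.1, 0) : R₁ × R₂) • x = c • x := by
  ext
  calc ((c.1, 0) : R₁ × R₂) • (x : Q) = ((c.1, 0) + (0, c.2) * (0, 1) : R₁ × R₂) • (x : Q) := by
        rw [add_smul, mul_smul, mem_fstPart.1 x.2, smul_zero, add_zero]
    _ = c • (x : Q) := by congr 1; ext <;> simp

instance : SMul R₁ (fstPart R₁ R₂ Q) := ⟨fun r x => ((r, 0) : R₁ × R₂) • x⟩

instance : Module R₁ (fstPart R₁ R₂ Q) :=
  Prod.fst_surjective.moduleLeft (RingHom.fst R₁ R₂) fstPart_smul_eq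

instance : IsScalarTower (R₁ × R₂) R₁ (fstPart R₁ R₂ Q) :=
  .of_algebraMap_smul fstPart_smul_eq

instance [Module.Projective (R₁ × R₂) Q] : Module.Projective (R₁ × R₂) (fstPart R₁ R₂ Q) :=
  .of_split (fstPart R₁ R₂ Q).subtype
    (LinearMap.codRestrict _ (((1, 0) : R₁ × R₂) • LinearMap.id) fun q => by
      simp [mem_fstPart, smul_smul, Prod.mk_zero_zero])
    (by ext x; simpa using congr($(fstPart_smul_eq 1 x).1))

instance [Module.Projective (R₁ × R₂) Q] : Module.Projective R₁ (fstPart R₁ R₂ Q) :=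
  have : Algebra.FormallyUnramified (R₁ × R₂) R₁ :=
    .of_surjective (Algebra.ofId _ _) Prod.algebraMap_fst_surjective
  have : Algebra.FiniteType (R₁ × R₂) R₁ :=
    .of_surjective (Algebra.ofId _ _) Prod.algebraMap_fst_surjective
  Algebra.FormallyUnramified.projective_of_restrictScalars (R₁ × R₂) R₁ _

variable {P : Type*} [AddCommGroup P] [Module R₁ P] [Module (R₁ × R₂) P]
  [IsScalarTower (R₁ × R₂) R₁ P]

theorem LinearMap.apply_mem_fstPart (g : P →ₗ[R₁ × R₂] Q) (p : P) : g p ∈ fstPart R₁ R₂ Q := by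
  rw [mem_fstPart, ← map_smul, ← algebraMap_smul R₁,
    show algebraMap (R₁ × R₂) R₁ (0, 1) = 0 from rfl, zero_smul, map_zero]

def LinearMap.toFstPart (g : P →ₗ[R₁ × R₂] Q) : P →ₗ[R₁] fstPart R₁ R₂ Q :=
  (g.codRestrict _ g.apply_mem_fstPart).extendScalarsOfSurjective Prod.algebraMap_fst_surjective

@[simp] theorem LinearMap.coe_toFstPart_apply (g : P →ₗ[R₁ × R₂] Q) (p : P) :
    (g.toFstPart p : Q) = g p := rfl

end

theorem stronglyGorensteinProjective_prod_of_left_general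
    (R₁ : Type u) (R₂ : Type u) [CommRing R₁] [CommRing R₂]
    (N : Type v) [AddCommGroup N] [Module R₁ N]
    (hN : IsStronglyGorensteinProjective R₁ (ModuleCat.of R₁ N)) :
    letI : Module (R₁ × R₂) N := Module.compHom N (RingHom.fst R₁ R₂)
    IsStronglyGorensteinProjective (R₁ × R₂) (ModuleCat.of (R₁ × R₂) N) := by
  let : Module (R₁ × R₂) N := Module.compHom N (RingHom.fst R₁ R₂)
  have : IsScalarTower (R₁ × R₂) R₁ N := .of_algebraMap_smul fun _ _ => rfl
  obtain ⟨P, f, _, hf, ⟨e⟩, hlift⟩ := hN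
  let : Module (R₁ × R₂) P := Module.compHom P (RingHom.fst R₁ R₂)
  have : IsScalarTower (R₁ × R₂) R₁ P := .of_algebraMap_smul fun _ _ => rfl
  refine ⟨.of (R₁ × R₂) P, f.restrictScalars (R₁ × R₂), .trans (S := R₁), ?_, ⟨?_⟩, ?_⟩
  · rw [LinearMap.range_restrictScalars, LinearMap.ker_restrictScalars, hf]
  · exact (e.restrictScalars (R₁ × R₂) : N ≃ₗ[R₁ × R₂] LinearMap.range f).trans
      (.ofEq _ _ (LinearMap.range_restrictScalars _).symm)
  · intro Q _ g hg
    obtain ⟨h, hh⟩ := hlift (.of R₁ (fstPart R₁ R₂ Q)) inferInstance g.toFstPart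
      (by ext p; simpa using congr($hg p))
    exact ⟨(fstPart R₁ R₂ Q).subtype ∘ₗ h.restrictScalars (R₁ × R₂),
      by ext p; exact congr(Subtype.val $(LinearMap.congr_fun hh p))⟩

/-- If `R₁, R₂` have finite Gorenstein global dimension and `N` is a strongly Gorenstein
projective `R₁`-module, then `N × 0` is a strongly Gorenstein projective `R₁ × R₂`-module
(where `R₁ × R₂` acts on `N` through the first projection). -/
theorem stronglyGorensteinProjective_prod_of_left
    (R₁ : Type u) (R₂ : Type u) [CommRing R₁] [CommRing R₂]
    (h₁ : ∃ n : ℕ, ∀ M : ModuleCat.{v} R₁, GorensteinProjDimLE R₁ n M)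
    (h₂ : ∃ n : ℕ, ∀ M : ModuleCat.{v} R₂, GorensteinProjDimLE R₂ n M)
    (N : Type v) [AddCommGroup N] [Module R₁ N]
    (hN : IsStronglyGorensteinProjective R₁ (ModuleCat.of R₁ N)) :
    letI : Module (R₁ × R₂) N := Module.compHom N (RingHom.fst R₁ R₂)
    IsStronglyGorensteinProjective (R₁ × R₂) (ModuleCat.of (R₁ × R₂) N) :=
  stronglyGorensteinProjective_prod_of_left_general R₁ R₂ N hN
end

section
/- Let R₁ and R₂ be coherent commutative rings, each with finite Gorenstein weak dimension. If N is a strongly Gorenstein flat R₁-module, then N × 0 is a strongly Gorenstein flat module over the product ring R₁ × R₂. -/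
universe u v

/-! Write `S = R₁ × R₂` and `e = (1, 0)`, so that `R₁ = S[e⁻¹]` is a flat `S`-algebra. The complete
flat resolution `⋯ → F → F → ⋯` of `N` over `R₁` remains one over `S`: `F` is `S`-flat by
transitivity of flatness, and for an injective `S`-module `I` the summand `eI` is an injective
`R₁`-module with `F ⊗_S I ≅ F ⊗_{R₁} eI` naturally in `F` (because `1 - e` kills `F`), so the
`S`-exactness of `− ⊗_S I` follows from the `R₁`-exactness of `− ⊗_{R₁} eI`. -/

open TensorProduct

theorem Module.Injective.of_surjective_algebraMap {S R : Type*} [CommRing S] [CommRing R]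
    [Algebra S R] (hS : Function.Surjective (algebraMap S R)) {M : Type*} [AddCommGroup M]
    [Module S M] [Module R M] [IsScalarTower S R M] [Module.Injective S M] :
    Module.Injective R M := by
  refine ⟨fun X Y _ _ _ _ φ hφ g => ?_⟩
  let : Module S X := Module.compHom X (algebraMap S R)
  let : Module S Y := Module.compHom Y (algebraMap S R)
  have : IsScalarTower S R X := IsScalarTower.of_algebraMap_smul fun _ _ => rfl
  have : IsScalarTower S R Y := IsScalarTower.of_algebraMap_smul fun _ _ => rfl
  obtain ⟨h, hh⟩ :=
    Module.Injective.out (φ.restrictScalars S) hφ (g.restrictScalars S)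
  refine ⟨{ h with map_smul' := fun r y => ?_ }, hh⟩
  obtain ⟨s, rfl⟩ := hS r
  change h (s • y) = algebraMap S R s • h y
  rw [algebraMap_smul]
  exact h.map_smul s y

theorem TensorProduct.CompatibleSMul.of_surjective_algebraMap {S R : Type*} [CommRing S]
    [CommRing R] [Algebra S R] (hS : Function.Surjective (algebraMap S R)) (M N : Type*)
    [AddCommGroup M] [AddCommGroup N] [Module S M] [Module R M] [IsScalarTower S R M]
    [Module S N] [Module R N] [IsScalarTower S R N] : CompatibleSMul S R M N := by
  refine ⟨fun r m n => ?_⟩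
  obtain ⟨s, rfl⟩ := hS r
  simp only [algebraMap_smul, smul_tmul]

theorem Module.Injective.of_retract {R : Type*} [Ring R] {M N : Type v} [AddCommGroup M]
    [AddCommGroup N] [Module R M] [Module R N] [Module.Injective R M] (i : N →ₗ[R] M)
    (p : M →ₗ[R] N) (hpi : p ∘ₗ i = LinearMap.id) : Module.Injective R N := by
  refine ⟨fun X Y _ _ _ _ φ hφ g => ?_⟩
  obtain ⟨h, hh⟩ := Module.Injective.out φ hφ (i ∘ₗ g)
  refine ⟨p ∘ₗ h, fun x => ?_⟩
  rw [LinearMap.comp_apply, hh, ← LinearMap.comp_apply, ← LinearMap.comp_assoc, hpi,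
    LinearMap.id_comp]

namespace Prod

variable {R₁ R₂ : Type*} [CommRing R₁] [CommRing R₂]

abbrev algebraFst_s12 : Algebra (R₁ × R₂) R₁ := (RingHom.fst R₁ R₂).toAlgebra

attribute [local instance] algebraFst_s12

instance flat_fst : Module.Flat (R₁ × R₂) R₁ :=
  IsLocalization.flat R₁ (Submonoid.powers ((1, 0) : R₁ × R₂))

variable (R₁ R₂) (I : Type*) [AddCommGroup I] [Module (R₁ × R₂) I]

/-- The summand `eI`, cut out as the kernel of `1 - e = (0, 1)`. -/
def fstComponent : Submodule (R₁ × R₂) I :=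
  LinearMap.ker (((0, 1) : R₁ × R₂) • LinearMap.id)

variable {R₁ R₂ I}

theorem mem_fstComponent {y : I} : y ∈ fstComponent R₁ R₂ I ↔ ((0, 1) : R₁ × R₂) • y = 0 :=
  Iff.rfl

theorem fst_smul_fstComponent (s : R₁ × R₂) (x : fstComponent R₁ R₂ I) :
    ((s.1, 0) : R₁ × R₂) • x = s • x := by
  have hx : ((0, s.2) : R₁ × R₂) • x = 0 := by
    have hx₁ : ((0, 1) : R₁ × R₂) • x = 0 := Subtype.ext x.2
    rw [show ((0, s.2) : R₁ × R₂) = (0, s.2) * (0, 1) by ext <;> simp, mul_smul, hx₁, smul_zero]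
  conv_rhs => rw [show s = (s.1, 0) + (0, s.2) by ext <;> simp, add_smul, hx, add_zero]

instance : SMul R₁ (fstComponent R₁ R₂ I) := ⟨fun r x => ((r, 0) : R₁ × R₂) • x⟩

instance : Module R₁ (fstComponent R₁ R₂ I) :=
  Prod.fst_surjective.moduleLeft (RingHom.fst R₁ R₂) fst_smul_fstComponent

instance : IsScalarTower (R₁ × R₂) R₁ (fstComponent R₁ R₂ I) :=
  IsScalarTower.of_algebraMap_smul fst_smul_fstComponent

variable (R₁ R₂ I) in
def fstComponentProj : I →ₗ[R₁ × R₂] fstComponent R₁ R₂ I :=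
  LinearMap.codRestrict _ (((1, 0) : R₁ × R₂) • LinearMap.id) fun y => by
    simp [mem_fstComponent, smul_smul, Prod.mk_zero_zero]

theorem fstComponentProj_comp_subtype :
    fstComponentProj R₁ R₂ I ∘ₗ (fstComponent R₁ R₂ I).subtype = LinearMap.id := by
  refine LinearMap.ext fun x => ?_
  change ((1, 0) : R₁ × R₂) • x = x
  simpa using fst_smul_fstComponent 1 x

theorem subtype_comp_fstComponentProj :
    (fstComponent R₁ R₂ I).subtype ∘ₗ fstComponentProj R₁ R₂ I =
      ((1, 0) : R₁ × R₂) • LinearMap.id :=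
  rfl

instance [Module.Injective (R₁ × R₂) I] : Module.Injective (R₁ × R₂) (fstComponent R₁ R₂ I) :=
  .of_retract _ _ fstComponentProj_comp_subtype

instance [Module.Injective (R₁ × R₂) I] : Module.Injective R₁ (fstComponent R₁ R₂ I) :=
  .of_surjective_algebraMap (S := R₁ × R₂) Prod.fst_surjective

variable (F : Type*) [AddCommGroup F] [Module R₁ F] [Module (R₁ × R₂) F]
  [IsScalarTower (R₁ × R₂) R₁ F]

instance : CompatibleSMul (R₁ × R₂) R₁ F (fstComponent R₁ R₂ I) :=
  .of_surjective_algebraMap (S := R₁ × R₂) Prod.fst_surjective _ _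

theorem lTensor_fstComponentProj_retract :
    (fstComponent R₁ R₂ I).subtype.lTensor F ∘ₗ (fstComponentProj R₁ R₂ I).lTensor F =
      LinearMap.id := by
  rw [← LinearMap.lTensor_comp, subtype_comp_fstComponentProj]
  refine TensorProduct.ext' fun x y => ?_
  rw [LinearMap.lTensor_tmul, LinearMap.smul_apply, LinearMap.id_apply, ← smul_tmul,
    LinearMap.id_apply, ← algebraMap_smul R₁ ((1, 0) : R₁ × R₂) x]
  exact congrArg (· ⊗ₜ y) (one_smul R₁ x)

variable (I) in
noncomputable def tensorFstComponentEquiv :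
    F ⊗[R₁ × R₂] I ≃ₗ[R₁ × R₂] F ⊗[R₁] fstComponent R₁ R₂ I :=
  (LinearEquiv.ofLinearMap ((fstComponentProj R₁ R₂ I).lTensor F)
      ((fstComponent R₁ R₂ I).subtype.lTensor F)
      (by rw [← LinearMap.lTensor_comp, fstComponentProj_comp_subtype, LinearMap.lTensor_id])
      (lTensor_fstComponentProj_retract F) :
      F ⊗[R₁ × R₂] I ≃ₗ[R₁ × R₂] F ⊗[R₁ × R₂] fstComponent R₁ R₂ I).trans
    (equivOfCompatibleSMul R₁ (R₁ × R₂) (R₁ × R₂) F (fstComponent R₁ R₂ I))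

theorem tensorFstComponentEquiv_naturality {F' : Type*} [AddCommGroup F'] [Module R₁ F']
    [Module (R₁ × R₂) F'] [IsScalarTower (R₁ × R₂) R₁ F'] (f : F →ₗ[R₁] F') :
    (f.rTensor (fstComponent R₁ R₂ I)).restrictScalars (R₁ × R₂) ∘ₗ
        (tensorFstComponentEquiv I F).toLinearMap =
      (tensorFstComponentEquiv I F').toLinearMap ∘ₗ (f.restrictScalars (R₁ × R₂)).rTensor I :=
  TensorProduct.ext' fun _ _ => rfl

theorem exact_rTensor_of_exact_rTensor_fstComponent {F' F'' : Type*} [AddCommGroup F']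
    [Module R₁ F'] [Module (R₁ × R₂) F'] [IsScalarTower (R₁ × R₂) R₁ F'] [AddCommGroup F'']
    [Module R₁ F''] [Module (R₁ × R₂) F''] [IsScalarTower (R₁ × R₂) R₁ F'']
    {f : F →ₗ[R₁] F'} {g : F' →ₗ[R₁] F''}
    (h : Function.Exact (f.rTensor (fstComponent R₁ R₂ I)) (g.rTensor (fstComponent R₁ R₂ I))) :
    Function.Exact ((f.restrictScalars (R₁ × R₂)).rTensor I)
      ((g.restrictScalars (R₁ × R₂)).rTensor I) :=
  (Function.Exact.iff_of_ladder_linearEquiv (tensorFstComponentEquiv_naturality F f)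
    (tensorFstComponentEquiv_naturality F' g)).mp h

end Prod

attribute [local instance] Prod.algebraFst_s12

theorem IsStronglyGorensteinFlat.restrictScalars_fst {R₁ R₂ : Type u} [CommRing R₁]
    [CommRing R₂] {N : Type v} [AddCommGroup N] [Module R₁ N] [Module (R₁ × R₂) N]
    [IsScalarTower (R₁ × R₂) R₁ N] (hN : IsStronglyGorensteinFlat R₁ (ModuleCat.of R₁ N)) :
    IsStronglyGorensteinFlat (R₁ × R₂) (ModuleCat.of (R₁ × R₂) N) := by
  obtain ⟨F, f, hF, hff, ⟨e⟩, hI⟩ := hN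
  let : Module (R₁ × R₂) F := Module.compHom F (algebraMap (R₁ × R₂) R₁)
  have : IsScalarTower (R₁ × R₂) R₁ F := IsScalarTower.of_algebraMap_smul fun _ _ => rfl
  refine ⟨.of (R₁ × R₂) F, f.restrictScalars (R₁ × R₂), .trans (R₁ × R₂) R₁ F,
    by rw [LinearMap.range_restrictScalars, LinearMap.ker_restrictScalars, hff],
    ⟨e.restrictScalars (R₁ × R₂)⟩, fun I hI' => ?_⟩
  have hJ := hI (.of R₁ (Prod.fstComponent R₁ R₂ I)) inferInstance
  exact (LinearMap.exact_iff.mp (Prod.exact_rTensor_of_exact_rTensor_fstComponent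
    (F := F) (LinearMap.exact_iff.mpr hJ.symm))).symm

theorem stronglyGorensteinFlat_prod_of_left_general
    (R₁ : Type u) (R₂ : Type u) [CommRing R₁] [CommRing R₂]
    (N : Type v) [AddCommGroup N] [Module R₁ N]
    (hN : IsStronglyGorensteinFlat R₁ (ModuleCat.of R₁ N)) :
    letI : Module (R₁ × R₂) N := Module.compHom N (RingHom.fst R₁ R₂)
    IsStronglyGorensteinFlat (R₁ × R₂) (ModuleCat.of (R₁ × R₂) N) :=
  letI : Module (R₁ × R₂) N := Module.compHom N (RingHom.fst R₁ R₂)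
  haveI : IsScalarTower (R₁ × R₂) R₁ N := IsScalarTower.of_algebraMap_smul fun _ _ => rfl
  hN.restrictScalars_fst

/-- If `R₁, R₂` are coherent with finite Gorenstein weak dimension and `N` is a strongly
Gorenstein flat `R₁`-module, then `N × 0` is a strongly Gorenstein flat `R₁ × R₂`-module
(where `R₁ × R₂` acts on `N` through the first projection). -/
theorem stronglyGorensteinFlat_prod_of_left
    (R₁ : Type u) (R₂ : Type u) [CommRing R₁] [CommRing R₂]
    (hcoh₁ : IsCoherentRing R₁) (hcoh₂ : IsCoherentRing R₂)
    (h₁ : ∃ n : ℕ, ∀ M : ModuleCat.{v} R₁, GorensteinFlatDimLE R₁ n M)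
    (h₂ : ∃ n : ℕ, ∀ M : ModuleCat.{v} R₂, GorensteinFlatDimLE R₂ n M)
    (N : Type v) [AddCommGroup N] [Module R₁ N]
    (hN : IsStronglyGorensteinFlat R₁ (ModuleCat.of R₁ N)) :
    letI : Module (R₁ × R₂) N := Module.compHom N (RingHom.fst R₁ R₂)
    IsStronglyGorensteinFlat (R₁ × R₂) (ModuleCat.of (R₁ × R₂) N) :=
  stronglyGorensteinFlat_prod_of_left_general R₁ R₂ N hN
end
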